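/- arXiv:1105.2128 — 8 statements merged into one kernel-verified Lean document; each statement's English description precedes it below -/
import Mathlib

section
/- For every s > 0, the squared Hellinger distance between the one-dimensional Gaussian measures N(0,1) and N(0,s²) satisfies H²(N(0,1), N(0,s²)) ≤ 2(s² − 1)². -/
open MeasureTheory ProbabilityTheory Real
open scoped NNReal ENNReal

/-- Squared Hellinger distance `H²(P,Q) = ∫ (√(dP/dμ) − √(dQ/dμ))² dμ` with the
dominating measure `μ = P + Q`. -/
noncomputable def sqHellinger {Ω : Type*} [MeasurableSpace Ω] (P Q : Measure Ω) : ℝ :=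
  ∫ ω, (Real.sqrt ((P.rnDeriv (P + Q)) ω).toReal
      - Real.sqrt ((Q.rnDeriv (P + Q)) ω).toReal) ^ 2 ∂(P + Q)

private lemma sqrt_sub_sq_mul (a b c : ℝ) (ha : 0 ≤ a) (hb : 0 ≤ b) (hc : 0 ≤ c) :
    c * (Real.sqrt a - Real.sqrt b) ^ 2 = (Real.sqrt (a * c) - Real.sqrt (b * c)) ^ 2 := by
  rw [Real.sqrt_mul ha, Real.sqrt_mul hb]
  have h : (Real.sqrt a * Real.sqrt c - Real.sqrt b * Real.sqrt c) ^ 2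
      = (Real.sqrt a - Real.sqrt b) ^ 2 * (Real.sqrt c) ^ 2 := by ring
  rw [h, Real.sq_sqrt hc, mul_comm]

/-- For every `s > 0`, `H²(N(0,1), N(0,s²)) ≤ 2(s² − 1)²`. -/
theorem sqHellinger_gaussianReal_scale_le (s : ℝ) (hs : 0 < s) :
    sqHellinger (gaussianReal 0 1) (gaussianReal 0 ⟨s ^ 2, sq_nonneg s⟩) ≤
      2 * (s ^ 2 - 1) ^ 2 := by
  have hπ := Real.pi_pos
  set t : ℝ≥0 := ⟨s ^ 2, sq_nonneg s⟩ with ht_def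
  have hts : (t : ℝ) = s ^ 2 := rfl
  have ht : t ≠ 0 := by
    intro h
    rw [h, NNReal.coe_zero] at hts
    nlinarith
  set P := gaussianReal 0 1 with hP_def
  set Q := gaussianReal 0 t with hQ_def
  set p : ℝ → ℝ≥0∞ := gaussianPDF 0 1 with hp_def
  set q : ℝ → ℝ≥0∞ := gaussianPDF 0 t with hq_def
  have hPp : P = volume.withDensity p := gaussianReal_of_var_ne_zero 0 one_ne_zero
  have hQq : Q = volume.withDensity q := gaussianReal_of_var_ne_zero 0 ht
  have hp_meas : Measurable p := measurable_gaussianPDF 0 1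
  have hq_meas : Measurable q := measurable_gaussianPDF 0 t
  have hpq_meas : Measurable (p + q) := hp_meas.add hq_meas
  have hμ : P + Q = volume.withDensity (p + q) := by
    rw [hPp, hQq, withDensity_add_left hp_meas]
  have h_ac_P : P ≪ P + Q := Measure.AbsolutelyContinuous.rfl.add_right Q
  have h_ac_Q : Q ≪ P + Q := by
    rw [add_comm P Q]; exact Measure.AbsolutelyContinuous.rfl.add_right P
  have hvol_ac : volume ≪ P + Q :=
    (gaussianReal_absolutelyContinuous' 0 ht).trans h_ac_Q
  -- a.e. identities for the Radon-Nikodym derivatives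
  have hμd : (P + Q).rnDeriv volume =ᵐ[volume] p + q := by
    rw [hμ]; exact Measure.rnDeriv_withDensity volume hpq_meas
  have hfp : P.rnDeriv (P + Q) * (P + Q).rnDeriv volume =ᵐ[volume] P.rnDeriv volume :=
    Measure.rnDeriv_mul_rnDeriv h_ac_P
  have hgq : Q.rnDeriv (P + Q) * (P + Q).rnDeriv volume =ᵐ[volume] Q.rnDeriv volume :=
    Measure.rnDeriv_mul_rnDeriv h_ac_Q
  have hPd : P.rnDeriv volume =ᵐ[volume] p := rnDeriv_gaussianReal 0 1
  have hQd : Q.rnDeriv volume =ᵐ[volume] q := rnDeriv_gaussianReal 0 t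
  have hfp' : ∀ᵐ x ∂volume, P.rnDeriv (P + Q) x * (p x + q x) = p x := by
    filter_upwards [hfp, hPd, hμd] with x h1 h2 h3
    rw [show p x + q x = (P + Q).rnDeriv volume x from h3.symm, ← Pi.mul_apply, h1, h2]
  have hgq' : ∀ᵐ x ∂volume, Q.rnDeriv (P + Q) x * (p x + q x) = q x := by
    filter_upwards [hgq, hQd, hμd] with x h1 h2 h3
    rw [show p x + q x = (P + Q).rnDeriv volume x from h3.symm, ← Pi.mul_apply, h1, h2]
  -- change of dominating measure in the Hellinger integral
  have hpq_fin : ∀ x, p x + q x ≠ ∞ := by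
    intro x
    simp [hp_def, hq_def, gaussianPDF]
  set ρ : ℝ → ℝ≥0 := fun x => (p x + q x).toNNReal with hρ_def
  have hρ_meas : Measurable ρ := hpq_meas.ennreal_toNNReal
  have hcoe : (volume : Measure ℝ).withDensity (p + q)
      = volume.withDensity (fun x => (ρ x : ℝ≥0∞)) := by
    refine withDensity_congr_ae (ae_of_all _ fun x => ?_)
    simp [hρ_def, ENNReal.coe_toNNReal (hpq_fin x)]
  set F : ℝ → ℝ := fun x => (Real.sqrt ((P.rnDeriv (P + Q)) x).toReal
      - Real.sqrt ((Q.rnDeriv (P + Q)) x).toReal) ^ 2 with hF_def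
  have hstep1 : sqHellinger P Q = ∫ x, (ρ x : ℝ) * F x := by
    rw [sqHellinger]
    show (∫ ω, F ω ∂(P + Q)) = _
    rw [hμ, hcoe, integral_withDensity_eq_integral_smul hρ_meas F]
    simp_rw [NNReal.smul_def, smul_eq_mul]
  -- rewrite the integrand as a function of the Lebesgue densities
  set pr : ℝ → ℝ := gaussianPDFReal 0 1 with hpr_def
  set qr : ℝ → ℝ := gaussianPDFReal 0 t with hqr_def
  have hpr_nonneg : ∀ x, 0 ≤ pr x := gaussianPDFReal_nonneg 0 1
  have hqr_nonneg : ∀ x, 0 ≤ qr x := gaussianPDFReal_nonneg 0 t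
  have hstep2 : sqHellinger P Q = ∫ x, (Real.sqrt (pr x) - Real.sqrt (qr x)) ^ 2 := by
    rw [hstep1]
    refine integral_congr_ae ?_
    filter_upwards [hfp', hgq'] with x h1 h2
    have hρx : (ρ x : ℝ) = (p x + q x).toReal := rfl
    rw [hF_def, hρx, sqrt_sub_sq_mul _ _ _ ENNReal.toReal_nonneg ENNReal.toReal_nonneg
      ENNReal.toReal_nonneg]
    have e1 : (P.rnDeriv (P + Q) x).toReal * (p x + q x).toReal = pr x := by
      rw [← ENNReal.toReal_mul, h1, hp_def, gaussianPDF, ENNReal.toReal_ofReal (hpr_nonneg x)]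
    have e2 : (Q.rnDeriv (P + Q) x).toReal * (p x + q x).toReal = qr x := by
      rw [← ENNReal.toReal_mul, h2, hq_def, gaussianPDF, ENNReal.toReal_ofReal (hqr_nonneg x)]
    rw [e1, e2]
  -- pointwise expansion of the integrand
  set b : ℝ := (1 + s ^ 2) / (4 * s ^ 2) with hb_def
  have hb_pos : 0 < b := by positivity
  set c : ℝ := (Real.sqrt (2 * π * s))⁻¹ with hc_def
  have hc_nonneg : 0 ≤ c := by positivity
  have hprod : ∀ x, pr x * qr x = (c * rexp (-b * x ^ 2)) ^ 2 := by
    intro x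
    have h2πs : Real.sqrt (2 * π * (1 : ℝ≥0)) * Real.sqrt (2 * π * (t : ℝ)) = 2 * π * s := by
      rw [← Real.sqrt_mul (by positivity), hts,
        show (2 * π * (1 : ℝ≥0) ) * (2 * π * s ^ 2) = (2 * π * s) ^ 2 by push_cast; ring,
        Real.sqrt_sq (by positivity)]
    rw [hpr_def, hqr_def]
    simp only [gaussianPDFReal, sub_zero]
    rw [mul_mul_mul_comm, ← mul_inv, h2πs, ← Real.exp_add, mul_pow, hc_def, inv_pow,
      Real.sq_sqrt (by positivity), ← Real.exp_nat_mul]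
    congr 1
    rw [hb_def]
    have ht1 : ((1 : ℝ≥0) : ℝ) = 1 := rfl
    rw [ht1, hts]
    field_simp
    ring
  have hsqrt_prod : ∀ x, Real.sqrt (pr x) * Real.sqrt (qr x) = c * rexp (-b * x ^ 2) := by
    intro x
    rw [← Real.sqrt_mul (hpr_nonneg x), hprod x,
      Real.sqrt_sq (by positivity)]
  have h_eq : ∀ x, (Real.sqrt (pr x) - Real.sqrt (qr x)) ^ 2
      = pr x + qr x - 2 * (c * rexp (-b * x ^ 2)) := by
    intro x
    have e1 : Real.sqrt (pr x) ^ 2 = pr x := Real.sq_sqrt (hpr_nonneg x)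
    have e2 : Real.sqrt (qr x) ^ 2 = qr x := Real.sq_sqrt (hqr_nonneg x)
    have e3 := hsqrt_prod x
    nlinarith [e1, e2, e3]
  -- integrate
  have hint_p : Integrable pr := integrable_gaussianPDFReal 0 1
  have hint_q : Integrable qr := integrable_gaussianPDFReal 0 t
  have hint_e : Integrable (fun x : ℝ => rexp (-b * x ^ 2)) := integrable_exp_neg_mul_sq hb_pos
  have hint_pq : Integrable (fun x => pr x + qr x) (volume : Measure ℝ) := hint_p.add hint_q
  have hint_c : Integrable (fun x : ℝ => 2 * (c * rexp (-b * x ^ 2)))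
      (volume : Measure ℝ) := (hint_e.const_mul c).const_mul 2
  have hstep3 : sqHellinger P Q = 2 - 2 * (c * Real.sqrt (π / b)) := by
    rw [hstep2]
    simp only [h_eq]
    rw [integral_sub hint_pq hint_c, integral_add hint_p hint_q, integral_const_mul,
      integral_const_mul, integral_gaussian]
    rw [hpr_def, hqr_def, integral_gaussianPDFReal_eq_one 0 one_ne_zero,
      integral_gaussianPDFReal_eq_one 0 ht]
    norm_num
  have hc2 : c * Real.sqrt (π / b) = Real.sqrt (2 * s / (1 + s ^ 2)) := by
    rw [hc_def, ← Real.sqrt_inv, ← Real.sqrt_mul (by positivity)]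
    congr 1
    rw [hb_def]
    field_simp
    ring
  rw [hstep3, hc2]
  -- final elementary inequality
  set r : ℝ := Real.sqrt (2 * s / (1 + s ^ 2)) with hr_def
  have hr0 : 0 ≤ r := Real.sqrt_nonneg _
  have hr2 : r ^ 2 * (1 + s ^ 2) = 2 * s := by
    rw [hr_def, Real.sq_sqrt (by positivity)]
    field_simp
  have hr1 : r ≤ 1 := by nlinarith [sq_nonneg (s - 1), sq_nonneg (r - 1), sq_nonneg (r + 1)]
  nlinarith [mul_nonneg (mul_nonneg hr0 (sub_nonneg.mpr hr1)) (by positivity : (0:ℝ) ≤ 1 + s ^ 2),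
    mul_nonneg (sq_nonneg (s - 1)) hs.le, sq_nonneg (s - 1), sq_nonneg (s + 1),
    mul_nonneg (mul_nonneg (sq_nonneg (s - 1)) hs.le) hs.le,
    mul_nonneg (mul_nonneg (mul_nonneg (sq_nonneg (s-1)) hs.le) hs.le) hs.le]
end

section
/- Let A, B ∈ ℝ^{d×d} be symmetric matrices such that |vᵀAv| ≤ vᵀBv for all v ∈ ℝ^d. Then ‖A‖_HS ≤ ‖B‖_HS. -/
/-- The squared Hilbert–Schmidt (Frobenius) norm `‖A‖_HS² = ∑_{k,l} A_{kl}²`. -/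
def frobeniusNormSq {d : ℕ} (A : Matrix (Fin d) (Fin d) ℝ) : ℝ :=
  ∑ k, ∑ l, (A k l) ^ 2

open Matrix in
lemma frobeniusNormSq_eq_trace {d : ℕ} (M : Matrix (Fin d) (Fin d) ℝ) :
    frobeniusNormSq M = Matrix.trace (Mᵀ * M) := by
  simp only [frobeniusNormSq, Matrix.trace, Matrix.diag_apply, Matrix.mul_apply,
    Matrix.transpose_apply]
  rw [Finset.sum_comm]
  simp [pow_two]

open Matrix in
lemma frobeniusNormSq_conj {d : ℕ} (M : Matrix (Fin d) (Fin d) ℝ)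
    (U : Matrix (Fin d) (Fin d) ℝ) (hU : U ∈ Matrix.unitaryGroup (Fin d) ℝ) :
    frobeniusNormSq (star U * M * U) = frobeniusNormSq M := by
  have h1 : U * star U = 1 := (Matrix.mem_unitaryGroup_iff).mp hU
  have hsU : star U = Uᵀ := Matrix.conjTranspose_eq_transpose_of_trivial U
  have hUUt : U * Uᵀ = 1 := by rw [← hsU]; exact h1
  rw [frobeniusNormSq_eq_trace, frobeniusNormSq_eq_trace]
  have key : (star U * M * U)ᵀ * (star U * M * U) = Uᵀ * (Mᵀ * M) * U := by
    rw [hsU, Matrix.transpose_mul, Matrix.transpose_mul, Matrix.transpose_transpose]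
    calc Uᵀ * (Mᵀ * U) * (Uᵀ * M * U)
        = Uᵀ * Mᵀ * ((U * Uᵀ) * (M * U)) := by
          simp only [Matrix.mul_assoc]
      _ = Uᵀ * (Mᵀ * M) * U := by
          rw [hUUt, Matrix.one_mul]; simp only [Matrix.mul_assoc]
  rw [key, Matrix.trace_mul_cycle, ← Matrix.mul_assoc, hUUt, Matrix.one_mul]

open Matrix in
lemma frobeniusNormSq_diagonal {d : ℕ} (v : Fin d → ℝ) :
    frobeniusNormSq (Matrix.diagonal v) = ∑ i, v i ^ 2 := by
  simp [frobeniusNormSq, Matrix.diagonal_apply, apply_ite (· ^ 2)]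

/-- If `A, B` are symmetric real matrices with `|vᵀAv| ≤ vᵀBv` for all `v`, then
`‖A‖_HS ≤ ‖B‖_HS`. -/
theorem frobenius_le_of_quadform_le {d : ℕ} (A B : Matrix (Fin d) (Fin d) ℝ)
    (hA : A.IsSymm) (hB : B.IsSymm)
    (h : ∀ v : Fin d → ℝ,
      |dotProduct v (Matrix.mulVec A v)| ≤ dotProduct v (Matrix.mulVec B v)) :
    Real.sqrt (frobeniusNormSq A) ≤ Real.sqrt (frobeniusNormSq B) := by
  have hA' : A.IsHermitian := by
    rwa [Matrix.IsHermitian, Matrix.conjTranspose_eq_transpose_of_trivial]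
  set U : Matrix (Fin d) (Fin d) ℝ :=
    (Matrix.IsHermitian.eigenvectorUnitary hA' : Matrix (Fin d) (Fin d) ℝ) with hUdef
  have hUmem : U ∈ Matrix.unitaryGroup (Fin d) ℝ := (Matrix.IsHermitian.eigenvectorUnitary hA').2
  set C : Matrix (Fin d) (Fin d) ℝ := star U * B * U with hCdef
  have hdiag : star U * A * U = Matrix.diagonal hA'.eigenvalues := by
    have := hA'.conjStarAlgAut_star_eigenvectorUnitary
    simpa using this
  -- the i-th column of U
  have hcol : ∀ i : Fin d, (fun k => U k i) = ⇑(hA'.eigenvectorBasis i) := by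
    intro i
    funext k
    exact Matrix.IsHermitian.eigenvectorUnitary_apply hA' k i
  have hCii : ∀ i, C i i =
      dotProduct (fun k => U k i) (Matrix.mulVec B (fun k => U k i)) := by
    intro i
    simp only [hCdef, Matrix.mul_apply, Matrix.star_apply, dotProduct,
      Matrix.mulVec, dotProduct, star_trivial, Finset.sum_mul, Finset.mul_sum]
    rw [Finset.sum_comm]
    exact Finset.sum_congr rfl fun j _ => Finset.sum_congr rfl fun k _ => by ring
  have hEig : ∀ i, hA'.eigenvalues i =
      dotProduct (fun k => U k i) (Matrix.mulVec A (fun k => U k i)) := by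
    intro i
    rw [hcol i]
    have := hA'.eigenvalues_eq i
    simpa using this
  -- main chain of (in)equalities on squared norms
  have hAeq : frobeniusNormSq A = ∑ i, hA'.eigenvalues i ^ 2 := by
    rw [← frobeniusNormSq_conj A U hUmem, hdiag, frobeniusNormSq_diagonal]
  have hBeq : frobeniusNormSq B = frobeniusNormSq C := (frobeniusNormSq_conj B U hUmem).symm
  have step1 : ∑ i, hA'.eigenvalues i ^ 2 ≤ ∑ i, (C i i) ^ 2 := by
    apply Finset.sum_le_sum
    intro i _
    have hle : |hA'.eigenvalues i| ≤ C i i := by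
      rw [hEig i, hCii i]; exact h _
    calc hA'.eigenvalues i ^ 2 = |hA'.eigenvalues i| ^ 2 := (sq_abs _).symm
      _ ≤ (C i i) ^ 2 := by
          apply pow_le_pow_left₀ (abs_nonneg _) hle
  have step2 : ∑ i, (C i i) ^ 2 ≤ frobeniusNormSq C := by
    apply Finset.sum_le_sum
    intro i _
    exact Finset.single_le_sum (f := fun l => C i l ^ 2) (fun _ _ => sq_nonneg _)
      (Finset.mem_univ i)
  apply Real.sqrt_le_sqrt
  rw [hAeq, hBeq]
  exact le_trans step1 step2
end

section
/- For every λ > 0, the series identity ∑_{j=1}^∞ λ³/(λ² + π²j²)² = (1 + 4λe^{−2λ} − e^{−4λ})/(4(1 − e^{−2λ})²) − 1/(2λ) holds. -/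
open Real

noncomputable section AuxCubic

open Complex MeasureTheory Set intervalIntegral ContinuousMap

namespace TsumCubicAux

instance : Fact ((0:ℝ) < 1) := ⟨zero_lt_one⟩

local notation "𝕌" => UnitAddCircle

def g (l : ℝ) (x : ℝ) : ℝ := Real.cosh (2 * l * (x - 1/2))

lemma g_cont {l : ℝ} : Continuous (AddCircle.liftIco 1 0 (g l)) := by
  apply AddCircle.liftIco_zero_continuous
  · show Real.cosh (2*l*(0 - 1/2)) = Real.cosh (2*l*(1 - 1/2))
    rw [show 2*l*((0:ℝ) - 1/2) = -(2*l*(1-1/2)) by ring, Real.cosh_neg]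
  · exact (Real.continuous_cosh.comp (by continuity)).continuousOn

/-- the function as a continuous map on the circle -/
def F (l : ℝ) : C(𝕌, ℂ) :=
  ContinuousMap.mk ((↑) ∘ (AddCircle.liftIco 1 0 (g l)))
    (Complex.continuous_ofReal.comp g_cont)

lemma fourierCoeffOn_g {l : ℝ} (hl : 0 < l) (n : ℤ) :
    fourierCoeffOn zero_lt_one (fun x => (g l x : ℂ)) n
      = ((l * Real.sinh l) / (l ^ 2 + π ^ 2 * n ^ 2) : ℝ) := by
  have hc1 : (2 * l - 2 * π * I * n : ℂ) ≠ 0 := by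
    intro h
    have := congrArg Complex.re h
    simp [Complex.ext_iff] at this
    nlinarith [Real.pi_pos]
  have hc2 : (-(2 * l) - 2 * π * I * n : ℂ) ≠ 0 := by
    intro h
    have := congrArg Complex.re h
    simp [Complex.ext_iff] at this
    nlinarith [Real.pi_pos]
  have hden : (l : ℝ) ^ 2 + π ^ 2 * n ^ 2 ≠ 0 := by positivity
  have key : ∀ c : ℂ, c ≠ 0 →
      (∫ x : ℝ in (0:ℝ)..1, Complex.exp (c * x)) = (Complex.exp c - 1) / c := by
    intro c hc
    rw [integral_exp_mul_complex hc]
    simp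
  have hpt : ∀ x : ℝ, fourier (-n) (x : AddCircle ((1:ℝ) - 0)) • ((g l x : ℂ))
      = Complex.exp (-l) / 2 * Complex.exp ((2*l - 2*π*I*n) * x)
        + Complex.exp l / 2 * Complex.exp ((-(2*l) - 2*π*I*n) * x) := by
    intro x
    rw [fourier_coe_apply, smul_eq_mul, g, Real.cosh_eq]
    push_cast
    rw [← mul_div_assoc, mul_add, ← Complex.exp_add, ← Complex.exp_add,
      div_mul_eq_mul_div, div_mul_eq_mul_div, ← Complex.exp_add, ← Complex.exp_add,
      ← add_div]
    congr 2 <;> ring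
  have step : (∫ x in (0:ℝ)..1, fourier (-n) (x : AddCircle ((1:ℝ) - 0)) • ((g l x : ℂ)))
      = Complex.exp (-l) / 2 * ((Complex.exp (2*l) - 1) / (2*l - 2*π*I*n))
        + Complex.exp l / 2 * ((Complex.exp (-(2*l)) - 1) / (-(2*l) - 2*π*I*n)) := by
    rw [intervalIntegral.integral_congr (g := fun x : ℝ =>
        Complex.exp (-l) / 2 * Complex.exp ((2*l - 2*π*I*n) * x)
        + Complex.exp l / 2 * Complex.exp ((-(2*l) - 2*π*I*n) * x)) (fun x _ => hpt x)]
    rw [intervalIntegral.integral_add, intervalIntegral.integral_const_mul,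
      intervalIntegral.integral_const_mul, key _ hc1, key _ hc2]
    · have he1 : Complex.exp (2*l - 2*π*I*n) = Complex.exp (2*l) := by
        rw [sub_eq_add_neg, Complex.exp_add,
          show (-(2*π*I*n) : ℂ) = ((-n : ℤ) : ℂ) * (2*π*I) by push_cast; ring,
          Complex.exp_int_mul_two_pi_mul_I, mul_one]
      have he2 : Complex.exp (-(2*l) - 2*π*I*n) = Complex.exp (-(2*l)) := by
        rw [sub_eq_add_neg, Complex.exp_add,
          show (-(2*π*I*n) : ℂ) = ((-n : ℤ) : ℂ) * (2*π*I) by push_cast; ring,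
          Complex.exp_int_mul_two_pi_mul_I, mul_one]
      rw [he1, he2]
    · exact (Continuous.intervalIntegrable (by fun_prop) _ _)
    · exact (Continuous.intervalIntegrable (by fun_prop) _ _)
  rw [fourierCoeffOn_eq_integral, step]
  have hE : Complex.exp (-(l:ℂ)) = (Complex.exp l)⁻¹ := Complex.exp_neg _
  have hE2 : Complex.exp (2*(l:ℂ)) = Complex.exp l * Complex.exp l := by
    rw [show (2*(l:ℂ)) = (l:ℂ) + (l:ℂ) by ring, Complex.exp_add]
  have hE2' : Complex.exp (-(2*(l:ℂ))) = (Complex.exp l * Complex.exp l)⁻¹ := by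
    rw [← hE2, Complex.exp_neg]
  have hEne : Complex.exp (l:ℂ) ≠ 0 := Complex.exp_ne_zero _
  have hdenC : ((l : ℂ) ^ 2 + (π:ℂ) ^ 2 * (n:ℂ) ^ 2) ≠ 0 := by
    intro h
    apply hden
    exact_mod_cast congrArg Complex.re h
  push_cast [Real.sinh_eq, hE, hE2, hE2']
  have hmul : (2*(l:ℂ) - 2*(π:ℂ)*I*(n:ℂ)) * (-(2*(l:ℂ)) - 2*(π:ℂ)*I*(n:ℂ))
      = -4*((l:ℂ)^2 + (π:ℂ)^2*(n:ℂ)^2) := by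
    linear_combination (4*(π:ℂ)^2*(n:ℂ)^2) * Complex.I_sq
  rw [show ((1:ℝ)/(1-0)) = 1 by norm_num, one_smul]
  rw [← mul_div_assoc, ← mul_div_assoc, div_add_div _ _ hc1 hc2, hmul]
  have h4D : (-4*((l:ℂ)^2 + (π:ℂ)^2*(n:ℂ)^2)) ≠ 0 := by
    simp [hdenC]
  rw [div_eq_div_iff h4D hdenC]
  field_simp
  ring

lemma fourierCoeff_F {l : ℝ} (hl : 0 < l) (n : ℤ) :
    fourierCoeff (⇑(F l)) n = ((l * Real.sinh l) / (l ^ 2 + π ^ 2 * n ^ 2) : ℝ) := by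
  have h1 : (⇑(F l)) = AddCircle.liftIco 1 0 ((↑) ∘ g l) := by ext1 x; rfl
  rw [h1, fourierCoeff_liftIco_eq]
  simpa only [zero_add, Function.comp_def] using fourierCoeffOn_g hl n

lemma integral_g_sq {l : ℝ} (hl : 0 < l) :
    (∫ x in (0:ℝ)..1, (g l x) ^ 2) = 1/2 + Real.sinh (2*l)/(4*l) := by
  have hderiv : ∀ x ∈ uIcc (0:ℝ) 1,
      HasDerivAt (fun y => y/2 + Real.sinh (4*l*(y-1/2))/(8*l)) ((g l x)^2) x := by
    intro x _
    have h1 : HasDerivAt (fun y : ℝ => 4*l*(y-1/2)) (4*l) x := by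
      have h := ((hasDerivAt_id x).sub_const (1/2)).const_mul (4*l)
      simp only [id, mul_one] at h
      exact h
    have h2 := (Real.hasDerivAt_sinh (4*l*(x-1/2))).comp x h1
    have h3 := ((hasDerivAt_id x).div_const 2).add (h2.div_const (8*l))
    convert h3 using 1
    · rfl
    · rfl
    · rfl
    have hl' : l ≠ 0 := hl.ne'
    rw [g.eq_1, show 4*l*(x-1/2) = 2*(2*l*(x-1/2)) by ring, Real.cosh_two_mul,
      mul_div_assoc, show (4*l)/(8*l) = 1/2 by field_simp; ring]
    nlinarith [Real.cosh_sq_sub_sinh_sq (2*l*(x-1/2))]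
  rw [intervalIntegral.integral_eq_sub_of_hasDerivAt hderiv
    (Continuous.intervalIntegrable (by unfold g; continuity) _ _)]
  rw [show 4*l*((1:ℝ)-1/2) = 2*l by ring, show 4*l*((0:ℝ)-1/2) = -(2*l) by ring,
    Real.sinh_neg]
  field_simp
  ring

lemma parseval_g {l : ℝ} (hl : 0 < l) :
    ∑' n : ℤ, ((l * Real.sinh l) / (l ^ 2 + π ^ 2 * n ^ 2))^2
      = 1/2 + Real.sinh (2*l)/(4*l) := by
  have hP := tsum_sq_fourierCoeff (toLp (E := ℂ) 2 AddCircle.haarAddCircle ℂ (F l))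
  have hL : ∀ n : ℤ, ‖fourierCoeff (⇑(toLp (E := ℂ) 2 AddCircle.haarAddCircle ℂ (F l))) n‖^2
      = ((l * Real.sinh l) / (l ^ 2 + π ^ 2 * n ^ 2))^2 := by
    intro n
    rw [fourierCoeff_toLp, fourierCoeff_F hl, Complex.norm_real, Real.norm_eq_abs, _root_.sq_abs]
  rw [tsum_congr hL] at hP
  rw [hP]
  -- now compute the integral
  have hvol : (volume : Measure 𝕌) = AddCircle.haarAddCircle := by
    rw [AddCircle.volume_eq_smul_haarAddCircle]
    simp
  have hcoe : ∫ t : 𝕌, ‖(toLp (E := ℂ) 2 AddCircle.haarAddCircle ℂ (F l)) t‖^2 ∂AddCircle.haarAddCircle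
      = ∫ t : 𝕌, ‖(F l) t‖^2 ∂AddCircle.haarAddCircle := by
    apply MeasureTheory.integral_congr_ae
    filter_upwards [ContinuousMap.coeFn_toLp (p := 2) (μ := AddCircle.haarAddCircle) (𝕜 := ℂ) (F l)]
      with t ht
    rw [ht]
  rw [hcoe, ← hvol]
  rw [← AddCircle.intervalIntegral_preimage 1 0 (fun t : 𝕌 => ‖(F l) t‖^2)]
  rw [show (0:ℝ) + 1 = 1 by norm_num]
  rw [← integral_g_sq hl]
  rw [intervalIntegral.integral_of_le zero_le_one, intervalIntegral.integral_of_le zero_le_one]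
  rw [MeasureTheory.integral_Ioc_eq_integral_Ioo, MeasureTheory.integral_Ioc_eq_integral_Ioo]
  apply setIntegral_congr_fun measurableSet_Ioo
  intro x hx
  have hx' : x ∈ Ico (0:ℝ) (0+1) := by
    rw [zero_add]
    exact Ioo_subset_Ico_self hx
  show ‖(F l) (x : 𝕌)‖^2 = _
  have : (F l) (x : 𝕌) = ((g l x : ℝ) : ℂ) := by
    show ((AddCircle.liftIco 1 0 (g l) (x : 𝕌) : ℝ) : ℂ) = _
    rw [AddCircle.liftIco_coe_apply hx']
  rw [this, Complex.norm_real, Real.norm_eq_abs, _root_.sq_abs]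

end TsumCubicAux

end AuxCubic

open TsumCubicAux in
/-- The series identity
`∑_{j≥1} λ³/(λ² + π²j²)² = (1 + 4λe^{−2λ} − e^{−4λ})/(4(1 − e^{−2λ})²) − 1/(2λ)`
for every `λ > 0`. -/
theorem tsum_cubic_over_quartic (l : ℝ) (hl : 0 < l) :
    ∑' j : ℕ, l ^ 3 / (l ^ 2 + π ^ 2 * ((j : ℝ) + 1) ^ 2) ^ 2 =
      (1 + 4 * l * Real.exp (-2 * l) - Real.exp (-4 * l)) /
        (4 * (1 - Real.exp (-2 * l)) ^ 2) - 1 / (2 * l) := by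
  classical
  set f : ℤ → ℝ := fun n => ((l * Real.sinh l) / (l ^ 2 + π ^ 2 * n ^ 2))^2 with hf
  have hsinh : 0 < Real.sinh l := Real.sinh_pos_iff.mpr hl
  -- summability
  have hsum : Summable f := by
    apply Summable.of_norm_bounded_eventually (g :=
      (fun n : ℤ => (l * Real.sinh l)^2 / π^4 * (1/(n:ℝ)^4)))
      (Summable.mul_left _ (Real.summable_one_div_int_pow (p := 4) |>.mpr (by norm_num)))
    apply ((Set.finite_singleton (0:ℤ)).eventually_cofinite_notMem).mono
    intro n hn
    have hn0 : (n:ℝ) ≠ 0 := Int.cast_ne_zero.mpr (by simpa using hn)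
    have hpos : (0:ℝ) < π^2 * (n:ℝ)^2 := by
      have := Real.pi_pos
      have h2 : (0:ℝ) < (n:ℝ)^2 := by positivity
      positivity
    rw [Real.norm_eq_abs, abs_of_nonneg (by positivity), hf]
    show (l * Real.sinh l / (l ^ 2 + π ^ 2 * (n:ℝ) ^ 2)) ^ 2 ≤ _
    rw [div_pow, show (l * Real.sinh l)^2 / π^4 * (1/(n:ℝ)^4)
        = (l * Real.sinh l)^2 / (π^2 * (n:ℝ)^2)^2 by
      rw [div_mul_div_comm, mul_one, mul_pow]
      ring_nf]
    gcongr
    nlinarith [sq_nonneg l]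
  have hHS : HasSum f (1/2 + Real.sinh (2*l)/(4*l)) := by
    have := hsum.hasSum
    rwa [show ∑' n, f n = 1/2 + Real.sinh (2*l)/(4*l) from parseval_g hl] at this
  have hnat := hHS.nat_add_neg
  have heq : (fun n : ℕ => f (n:ℤ) + f (-(n:ℤ))) = fun n : ℕ => 2 * f (n:ℤ) := by
    funext n
    simp only [hf]
    push_cast
    ring
  rw [heq] at hnat
  have hshift : HasSum (fun n : ℕ => 2 * f ((n:ℤ)+1))
      ((1/2 + Real.sinh (2*l)/(4*l)) - f 0) := by
    have h2 : HasSum (fun n : ℕ => 2 * f (n:ℤ))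
        ((1/2 + Real.sinh (2*l)/(4*l)) - f 0 + ∑ i ∈ Finset.range 1, 2 * f (i:ℤ)) := by
      convert hnat using 1
      simp
      ring
    have h3 := (hasSum_nat_add_iff (f := fun n : ℕ => 2 * f (n:ℤ)) 1).mpr h2
    convert h3 using 2 with n
    · rfl
    · push_cast; rfl
  have hD : ∀ j : ℕ, (0:ℝ) < l^2 + π^2*((j:ℝ)+1)^2 := by
    intro j
    have := Real.pi_pos
    positivity
  have hterm : ∀ j : ℕ, l ^ 3 / (l ^ 2 + π ^ 2 * ((j : ℝ) + 1) ^ 2) ^ 2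
      = (l/(2*(Real.sinh l)^2)) * (2 * f ((j:ℤ)+1)) := by
    intro j
    simp only [hf]
    push_cast
    rw [div_pow]
    field_simp
  have hf0 : f 0 = (Real.sinh l)^2 / l^2 := by
    simp only [hf]
    push_cast
    rw [show l^2 + π^2*(0:ℝ)^2 = l^2 by ring, div_pow, mul_pow,
      show (l^2)^2 = l^2*l^2 by ring,
      mul_div_mul_left _ _ (pow_ne_zero 2 hl.ne')]
  calc ∑' j : ℕ, l ^ 3 / (l ^ 2 + π ^ 2 * ((j : ℝ) + 1) ^ 2) ^ 2
      = ∑' j : ℕ, (l/(2*(Real.sinh l)^2)) * (2 * f ((j:ℤ)+1)) := tsum_congr hterm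
    _ = (l/(2*(Real.sinh l)^2)) * ((1/2 + Real.sinh (2*l)/(4*l)) - f 0) :=
        (hshift.mul_left _).tsum_eq
    _ = (1 + 4 * l * Real.exp (-2 * l) - Real.exp (-4 * l)) /
        (4 * (1 - Real.exp (-2 * l)) ^ 2) - 1 / (2 * l) := by
        rw [hf0]
        have hE0 : Real.exp l ≠ 0 := (Real.exp_pos l).ne'
        have hE1 : 1 < Real.exp l := by
          have := Real.exp_lt_exp.mpr hl
          rwa [Real.exp_zero] at this
        have hEE : 1 < Real.exp l * Real.exp l := by nlinarith
        have h2l : Real.exp (-2*l) = (Real.exp l * Real.exp l)⁻¹ := by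
          rw [show -2*l = -(l+l) by ring, Real.exp_neg, Real.exp_add]
        have h4l : Real.exp (-4*l)
            = (Real.exp l * Real.exp l * (Real.exp l * Real.exp l))⁻¹ := by
          rw [show -4*l = -((l+l)+(l+l)) by ring, Real.exp_neg, Real.exp_add, Real.exp_add]
        have hsinh1 : Real.sinh l = (Real.exp l - (Real.exp l)⁻¹)/2 := by
          rw [Real.sinh_eq, Real.exp_neg]
        have hsinh2 : Real.sinh (2*l)
            = (Real.exp l * Real.exp l - (Real.exp l * Real.exp l)⁻¹)/2 := by
          rw [Real.sinh_eq, show (2:ℝ)*l = l + l by ring, Real.exp_neg, Real.exp_add]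
        have hfac : ∀ x : ℝ, x ≠ 0 → x - x⁻¹ = (x*x - 1)/x := by
          intro x hx; field_simp
        have hqne : Real.exp l * Real.exp l - 1 ≠ 0 := by nlinarith
        rw [hsinh1, hsinh2, h2l, h4l]
        rw [hfac _ hE0, hfac _ (mul_ne_zero hE0 hE0)]
        rw [inv_eq_one_div, inv_eq_one_div]
        field_simp
        have hD' : (1 - Real.exp l ^ 2 * 2 + Real.exp l ^ 4) ≠ 0 := by
          rw [show (1 - Real.exp l ^ 2 * 2 + Real.exp l ^ 4) = (Real.exp l * Real.exp l - 1)^2 by ring]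
          exact pow_ne_zero 2 hqne
        ring_nf
        field_simp
        ring
end

section
/- For every θ > 0, as h → ∞ (h ranging over positive reals), (1/h) · ∑_{j=1}^∞ 1/(2(θ + h^{−2}π²j²)²) converges to 1/(8θ^{3/2}). -/
open Real Filter MeasureTheory Set


lemma fisher_aux_deriv (θ : ℝ) (hθ : 0 < θ) (x : ℝ) :
    HasDerivAt (fun y : ℝ => y / (4 * θ * (θ + π ^ 2 * y ^ 2))
        + Real.arctan (π * y / Real.sqrt θ) / (4 * θ * Real.sqrt θ * π))
      (1 / (2 * (θ + π ^ 2 * x ^ 2) ^ 2)) x := by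
  have hπ := Real.pi_pos
  have hs : (0:ℝ) < Real.sqrt θ := Real.sqrt_pos.2 hθ
  have hD : (0:ℝ) < θ + π ^ 2 * x ^ 2 := by positivity
  have h1 : HasDerivAt (fun y : ℝ => y / (4 * θ * (θ + π ^ 2 * y ^ 2)))
      ((1 * (4 * θ * (θ + π ^ 2 * x ^ 2)) - x * (4 * θ * (π ^ 2 * (2 * x))))
        / (4 * θ * (θ + π ^ 2 * x ^ 2)) ^ 2) x := by
    refine HasDerivAt.div (hasDerivAt_id x) ?_ (by positivity)
    have : HasDerivAt (fun y : ℝ => θ + π ^ 2 * y ^ 2) (π ^ 2 * (2 * x)) x := by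
      simpa using (((hasDerivAt_pow 2 x)).const_mul (π ^ 2)).const_add θ
    simpa [mul_assoc] using this.const_mul (4 * θ)
  have h2 : HasDerivAt (fun y : ℝ => Real.arctan (π * y / Real.sqrt θ))
      ((1 / (1 + (π * x / Real.sqrt θ) ^ 2)) * (π / Real.sqrt θ)) x := by
    have hu : HasDerivAt (fun y : ℝ => π * y / Real.sqrt θ) (π / Real.sqrt θ) x := by
      simpa [mul_div_assoc] using ((hasDerivAt_id x).const_mul π).div_const (Real.sqrt θ)
    exact (Real.hasDerivAt_arctan _).comp x hu
  have := h1.add (h2.div_const (4 * θ * Real.sqrt θ * π))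
  refine this.congr_deriv ?_
  have hss : Real.sqrt θ * Real.sqrt θ = θ := Real.mul_self_sqrt hθ.le
  field_simp
  ring_nf
  simp only [Real.sq_sqrt hθ.le]
  ring

lemma fisher_aux_int (θ : ℝ) (hθ : 0 < θ) :
    IntegrableOn (fun x : ℝ => 1 / (2 * (θ + π ^ 2 * x ^ 2) ^ 2)) (Ioi 0) ∧
    ∫ x in Ioi (0:ℝ), 1 / (2 * (θ + π ^ 2 * x ^ 2) ^ 2) = 1 / (8 * θ ^ ((3:ℝ)/2)) := by
  have hπ := Real.pi_pos
  have hs : (0:ℝ) < Real.sqrt θ := Real.sqrt_pos.2 hθ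
  set F : ℝ → ℝ := fun y => y / (4 * θ * (θ + π ^ 2 * y ^ 2))
      + Real.arctan (π * y / Real.sqrt θ) / (4 * θ * Real.sqrt θ * π) with hF
  have hderiv : ∀ x ∈ Ici (0:ℝ), HasDerivAt F (1 / (2 * (θ + π ^ 2 * x ^ 2) ^ 2)) x :=
    fun x _ => fisher_aux_deriv θ hθ x
  have hpos : ∀ x ∈ Ioi (0:ℝ), 0 ≤ 1 / (2 * (θ + π ^ 2 * x ^ 2) ^ 2) := by
    intro x _; positivity
  have hlim : Tendsto F atTop (nhds (1 / (8 * θ ^ ((3:ℝ)/2)))) := by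
    have l1 : Tendsto (fun y : ℝ => y / (4 * θ * (θ + π ^ 2 * y ^ 2))) atTop (nhds 0) := by
      have heq : ∀ᶠ y in atTop, y / (4 * θ * (θ + π ^ 2 * y ^ 2))
          = (4 * θ * (θ / y + π ^ 2 * y))⁻¹ := by
        filter_upwards [eventually_gt_atTop 0] with y hy
        rw [eq_comm, inv_eq_one_div, div_eq_div_iff (by positivity) (by positivity)]
        field_simp
      rw [tendsto_congr' heq]
      apply Tendsto.inv_tendsto_atTop
      apply Tendsto.const_mul_atTop (by positivity)
      apply Tendsto.add_atTop (tendsto_const_nhds.div_atTop tendsto_id)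
      exact (tendsto_id.const_mul_atTop (by positivity))
    have l2 : Tendsto (fun y : ℝ => Real.arctan (π * y / Real.sqrt θ) / (4 * θ * Real.sqrt θ * π))
        atTop (nhds ((π / 2) / (4 * θ * Real.sqrt θ * π))) := by
      apply Tendsto.div_const
      apply (tendsto_nhds_of_tendsto_nhdsWithin Real.tendsto_arctan_atTop).comp
      apply Tendsto.atTop_div_const hs
      exact tendsto_id.const_mul_atTop hπ
    have := l1.add l2
    rw [zero_add] at this
    convert this using 2
    rw [show (3:ℝ)/2 = 1 + 1/2 by norm_num, Real.rpow_add hθ, Real.rpow_one,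
      ← Real.sqrt_eq_rpow]
    field_simp
    ring
  have hF0 : F 0 = 0 := by simp [hF]
  refine ⟨integrableOn_Ioi_deriv_of_nonneg' hderiv hpos hlim, ?_⟩
  rw [integral_Ioi_of_hasDerivAt_of_nonneg' hderiv hpos hlim, hF0, sub_zero]

lemma fisher_aux_bounds (θ : ℝ) (hθ : 0 < θ) {h : ℝ} (hh : 0 < h) :
    (∑' j : ℕ, 1 / (2 * (θ + π ^ 2 * ((j : ℝ) + 1) ^ 2 / h ^ 2) ^ 2)) ≤
      h * (1 / (8 * θ ^ ((3:ℝ)/2))) ∧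
    h * (1 / (8 * θ ^ ((3:ℝ)/2))) - 1 / (2 * θ ^ 2) ≤
      ∑' j : ℕ, 1 / (2 * (θ + π ^ 2 * ((j : ℝ) + 1) ^ 2 / h ^ 2) ^ 2) := by
  have hπ := Real.pi_pos
  set f : ℝ → ℝ := fun x => 1 / (2 * (θ + π ^ 2 * x ^ 2) ^ 2) with hfdef
  obtain ⟨hint, hval⟩ := fisher_aux_int θ hθ
  set I : ℝ := 1 / (8 * θ ^ ((3:ℝ)/2)) with hI
  have hterm : (fun j : ℕ => 1 / (2 * (θ + π ^ 2 * ((j : ℝ) + 1) ^ 2 / h ^ 2) ^ 2))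
      = fun j : ℕ => f (((j : ℝ) + 1) / h) := by
    funext j; simp only [hfdef, div_pow, mul_div_assoc]
  have hfnonneg : ∀ x : ℝ, 0 ≤ f x := fun x => by positivity
  have hfab : ∀ x y : ℝ, 0 ≤ x → x ≤ y → f (y / h) ≤ f (x / h) := by
    intro x y hx hxy
    apply one_div_le_one_div_of_le (by positivity)
    have hxh : (0:ℝ) ≤ x / h := by positivity
    gcongr
  have hanti : ∀ b : ℝ, AntitoneOn (fun x : ℝ => f (x / h)) (Icc 0 b) := by
    intro b x hx y hy hxy
    exact hfab x y hx.1 hxy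
  -- partial sums are bounded by h * I
  have hIoc_le : ∀ b : ℝ, 0 ≤ b → ∫ x in (0:ℝ)..b, f x ≤ I := by
    intro b hb
    rw [intervalIntegral.integral_of_le hb, ← hval]
    apply setIntegral_mono_set hint
    · exact Eventually.of_forall fun x => hfnonneg x
    · exact HasSubset.Subset.eventuallyLE Ioc_subset_Ioi_self
  have hcomp : ∀ b : ℝ, (∫ x in (0:ℝ)..b, f (x / h)) = h * ∫ x in (0:ℝ)..b / h, f x := by
    intro b
    rw [intervalIntegral.integral_comp_div (f := f) (c := h) hh.ne', zero_div, smul_eq_mul]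
  have key : ∀ n : ℕ, ∑ i ∈ Finset.range n, f (((i : ℝ) + 1) / h) ≤ h * I := by
    intro n
    have h1 := (hanti (0 + (n:ℝ))).sum_le_integral
    simp only [zero_add] at h1
    have h1' : ∑ i ∈ Finset.range n, f (((i : ℝ) + 1) / h) ≤ ∫ x in (0:ℝ)..(n:ℝ), f (x / h) := by
      refine le_trans (le_of_eq ?_) h1
      apply Finset.sum_congr rfl
      intro i _
      push_cast
      ring_nf
    calc ∑ i ∈ Finset.range n, f (((i : ℝ) + 1) / h) ≤ ∫ x in (0:ℝ)..(n:ℝ), f (x / h) := h1'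
      _ = h * ∫ x in (0:ℝ)..(n:ℝ) / h, f x := hcomp _
      _ ≤ h * I := by
          apply mul_le_mul_of_nonneg_left (hIoc_le _ (by positivity)) hh.le
  have hsummable : Summable fun j : ℕ => f (((j : ℝ) + 1) / h) :=
    summable_of_sum_range_le (fun n => hfnonneg _) key
  constructor
  · rw [hterm]
    exact Real.tsum_le_of_sum_range_le (fun n => hfnonneg _) key
  · rw [hterm]
    -- lower bound
    have key2 : ∀ n : ℕ, h * ∫ x in (0:ℝ)..((n:ℝ) + 1) / h, f x
        ≤ 1 / (2 * θ ^ 2) + ∑' j : ℕ, f (((j : ℝ) + 1) / h) := by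
      intro n
      have h1 := (hanti (0 + ((n + 1 : ℕ):ℝ))).integral_le_sum
      simp only [zero_add] at h1
      have h2 : ∑ i ∈ Finset.range (n + 1), f ((i : ℝ) / h)
          ≤ 1 / (2 * θ ^ 2) + ∑' j : ℕ, f (((j : ℝ) + 1) / h) := by
        rw [Finset.sum_range_succ']
        have e0 : f ((0 : ℕ) / h) = 1 / (2 * θ ^ 2) := by
          simp [hfdef]
        rw [add_comm, e0]
        gcongr
        refine le_trans (le_of_eq (Finset.sum_congr rfl fun j _ => ?_))
          (Summable.sum_le_tsum (Finset.range n) (fun j _ => hfnonneg _) hsummable)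
        push_cast
        ring_nf
      calc h * ∫ x in (0:ℝ)..((n:ℝ) + 1) / h, f x
          = ∫ x in (0:ℝ)..((n + 1 : ℕ):ℝ), f (x / h) := by rw [hcomp]; push_cast; ring_nf
        _ ≤ ∑ i ∈ Finset.range (n + 1), f ((i : ℝ) / h) := h1
        _ ≤ _ := h2
    have hlim : Tendsto (fun n : ℕ => h * ∫ x in (0:ℝ)..((n:ℝ) + 1) / h, f x)
        atTop (nhds (h * I)) := by
      rw [← hval]
      apply Tendsto.const_mul
      apply intervalIntegral_tendsto_integral_Ioi 0 hint
      apply Tendsto.atTop_div_const hh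
      exact tendsto_atTop_add_const_right _ 1 tendsto_natCast_atTop_atTop
    have := le_of_tendsto hlim (Eventually.of_forall key2)
    linarith

open Real Filter in
/-- For every `θ > 0`, as `h → ∞`,
`(1/h)·∑_{j≥1} 1/(2(θ + h^{−2}π²j²)²) → 1/(8θ^{3/2})`. -/
theorem tendsto_fisher_information_div (θ : ℝ) (hθ : 0 < θ) :
    Tendsto
      (fun h : ℝ => (1 / h) * ∑' j : ℕ, 1 / (2 * (θ + π ^ 2 * ((j : ℝ) + 1) ^ 2 / h ^ 2) ^ 2))
      atTop (nhds (1 / (8 * θ ^ ((3 : ℝ) / 2)))) := by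
  set I : ℝ := 1 / (8 * θ ^ ((3:ℝ)/2)) with hI
  have lower : Tendsto (fun h : ℝ => I - 1 / (2 * θ ^ 2) * (1 / h)) atTop (nhds I) := by
    have h0 : Tendsto (fun h : ℝ => 1 / h) atTop (nhds 0) := by
      simpa [one_div] using (tendsto_inv_atTop_zero : Tendsto (fun h : ℝ => h⁻¹) atTop (nhds 0))
    have := tendsto_const_nhds (x := I) (f := atTop (α := ℝ)) |>.sub (h0.const_mul (1 / (2 * θ ^ 2)))
    simpa using this
  apply tendsto_of_tendsto_of_tendsto_of_le_of_le' lower tendsto_const_nhds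
  · filter_upwards [eventually_gt_atTop 0] with h hh
    have hb := (fisher_aux_bounds θ hθ hh).2
    calc I - 1 / (2 * θ ^ 2) * (1 / h) = (h * I - 1 / (2 * θ ^ 2)) / h := by
          field_simp
        _ ≤ (∑' j : ℕ, 1 / (2 * (θ + π ^ 2 * ((j : ℝ) + 1) ^ 2 / h ^ 2) ^ 2)) / h :=
          (div_le_div_iff_of_pos_right hh).mpr hb
        _ = (1 / h) * ∑' j : ℕ, 1 / (2 * (θ + π ^ 2 * ((j : ℝ) + 1) ^ 2 / h ^ 2) ^ 2) := by
          ring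
  · filter_upwards [eventually_gt_atTop 0] with h hh
    have hb := (fisher_aux_bounds θ hθ hh).1
    calc (1 / h) * ∑' j : ℕ, 1 / (2 * (θ + π ^ 2 * ((j : ℝ) + 1) ^ 2 / h ^ 2) ^ 2)
        = (∑' j : ℕ, 1 / (2 * (θ + π ^ 2 * ((j : ℝ) + 1) ^ 2 / h ^ 2) ^ 2)) / h := by ring
      _ ≤ (h * I) / h := (div_le_div_iff_of_pos_right hh).mpr hb
      _ = I := by field_simp
end

section
/- Let β and η be independent real random variables on a probability space, with β distributed as N(0, v) and η distributed as N(0, e²), where v > 0 and e > 0. Then the conditional distribution of β given β + η is, for almost every observed value y with respect to the law of β + η, the Gaussian measure N( (v/(v+e²))·y , v e²/(v+e²) ). -/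
open MeasureTheory ProbabilityTheory Real
open scoped ENNReal NNReal

lemma gauss_pdf_identity (v e : ℝ) (hv : 0 < v) (he : 0 < e) (y b : ℝ) :
    gaussianPDFReal 0 v.toNNReal b * gaussianPDFReal 0 (e ^ 2).toNNReal (y - b)
      = gaussianPDFReal 0 (v + e ^ 2).toNNReal y *
        gaussianPDFReal (v / (v + e ^ 2) * y) (v * e ^ 2 / (v + e ^ 2)).toNNReal b := by
  have he2 : (0:ℝ) < e ^ 2 := by positivity
  have hw : (0:ℝ) < v + e ^ 2 := by positivity
  have hτ : (0:ℝ) < v * e ^ 2 / (v + e ^ 2) := by positivity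
  simp only [gaussianPDFReal, Real.coe_toNNReal _ hv.le, Real.coe_toNNReal _ he2.le,
    Real.coe_toNNReal _ hw.le, Real.coe_toNNReal _ hτ.le, sub_zero]
  rw [mul_mul_mul_comm, ← Real.exp_add, mul_mul_mul_comm, ← Real.exp_add,
    ← mul_inv, ← mul_inv, ← Real.sqrt_mul (by positivity), ← Real.sqrt_mul (by positivity)]
  congr 2
  · congr 1
    field_simp
  · field_simp
    ring

lemma gaussianPDF_identity (v e : ℝ) (hv : 0 < v) (he : 0 < e) (y b : ℝ) :
    gaussianPDF 0 v.toNNReal b * gaussianPDF 0 (e ^ 2).toNNReal (y - b)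
      = gaussianPDF 0 (v + e ^ 2).toNNReal y *
        gaussianPDF (v / (v + e ^ 2) * y) (v * e ^ 2 / (v + e ^ 2)).toNNReal b := by
  simp only [gaussianPDF, ← ENNReal.ofReal_mul (gaussianPDFReal_nonneg _ _ _)]
  exact congrArg _ (gauss_pdf_identity v e hv he y b)

lemma measurable_gaussianReal_mean (t : ℝ≥0) : Measurable fun m : ℝ => gaussianReal m t := by
  by_cases ht : t = 0
  · subst ht
    simp only [gaussianReal_zero_var]
    exact Measure.measurable_dirac
  · refine Measure.measurable_of_measurable_coe _ fun s hs => ?_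
    simp_rw [gaussianReal_apply _ ht s, ← lintegral_indicator hs]
    have hjm : Measurable fun p : ℝ × ℝ => s.indicator (gaussianPDF p.1 t) p.2 := by
      have : (fun p : ℝ × ℝ => s.indicator (gaussianPDF p.1 t) p.2)
          = (Set.univ ×ˢ s).indicator (fun p : ℝ × ℝ => gaussianPDF p.1 t p.2) := by
        ext p
        by_cases h : p.2 ∈ s <;> simp [Set.indicator, h]
      rw [this]
      refine Measurable.indicator ?_ (MeasurableSet.univ.prod hs)
      simp only [gaussianPDF, gaussianPDFReal]
      fun_prop
    exact hjm.lintegral_prod_right'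

noncomputable def gaussCondKernel (v e : ℝ) : ProbabilityTheory.Kernel ℝ ℝ where
  toFun y := gaussianReal (v / (v + e ^ 2) * y) (v * e ^ 2 / (v + e ^ 2)).toNNReal
  measurable' := (measurable_gaussianReal_mean _).comp (measurable_const_mul _)

instance (v e : ℝ) : ProbabilityTheory.IsMarkovKernel (gaussCondKernel v e) :=
  ⟨fun _ => inferInstanceAs (IsProbabilityMeasure (gaussianReal _ _))⟩

lemma gaussCondKernel_apply (v e : ℝ) (y : ℝ) :
    gaussCondKernel v e y = gaussianReal (v / (v + e ^ 2) * y) (v * e ^ 2 / (v + e ^ 2)).toNNReal := rfl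

lemma joint_eq_compProd
    {α : Type*} [MeasurableSpace α] (μ : Measure α) [IsProbabilityMeasure μ]
    (β η : α → ℝ) (hβm : Measurable β) (hηm : Measurable η)
    (v e : ℝ) (hv : 0 < v) (he : 0 < e)
    (hβ : μ.map β = gaussianReal 0 v.toNNReal)
    (hη : μ.map η = gaussianReal 0 (e ^ 2).toNNReal)
    (hind : IndepFun β η μ) :
    μ.map (fun ω => (β ω + η ω, β ω))
      = (gaussianReal 0 (v + e ^ 2).toNNReal) ⊗ₘ gaussCondKernel v e := by
  have he2 : (0:ℝ) < e ^ 2 := by positivity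
  have hw : (0:ℝ) < v + e ^ 2 := by positivity
  have hτ : (0:ℝ) < v * e ^ 2 / (v + e ^ 2) := by positivity
  have hv' : v.toNNReal ≠ 0 := by simp [Real.toNNReal_eq_zero, not_le, hv]
  have he2' : (e ^ 2).toNNReal ≠ 0 := by simp [Real.toNNReal_eq_zero, not_le, he2, he.ne']
  have hw' : (v + e ^ 2).toNNReal ≠ 0 := by simp [Real.toNNReal_eq_zero, not_le, hw]
  have hτ' : (v * e ^ 2 / (v + e ^ 2)).toNNReal ≠ 0 := by
    simp [Real.toNNReal_eq_zero, not_le, hτ]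
  set gv := gaussianPDF 0 v.toNNReal with hgv
  set ge := gaussianPDF 0 (e ^ 2).toNNReal with hge
  set gw := gaussianPDF 0 (v + e ^ 2).toNNReal with hgw
  set gt : ℝ → ℝ → ℝ≥0∞ :=
    fun y => gaussianPDF (v / (v + e ^ 2) * y) (v * e ^ 2 / (v + e ^ 2)).toNNReal with hgt
  have hgtm : Measurable fun p : ℝ × ℝ => gt p.1 p.2 := by
    simp only [hgt, gaussianPDF, gaussianPDFReal]
    fun_prop
  have hpair := (indepFun_iff_map_prod_eq_prod_map_map hβm.aemeasurable hηm.aemeasurable).mp hind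
  rw [hβ, hη] at hpair
  have hmm : μ.map (fun ω => (β ω + η ω, β ω))
      = (μ.map fun ω => (β ω, η ω)).map (fun p : ℝ × ℝ => (p.1 + p.2, p.1)) := by
    rw [Measure.map_map (by fun_prop) (by fun_prop)]
    rfl
  rw [hmm, hpair]
  ext s hs
  have hfm : Measurable fun p : ℝ × ℝ => (p.1 + p.2, p.1) := by fun_prop
  have hT : MeasurableSet ((fun p : ℝ × ℝ => (p.1 + p.2, p.1)) ⁻¹' s) := hfm hs
  rw [Measure.map_apply hfm hs, Measure.prod_apply hT, Measure.compProd_apply hs]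
  -- inner values as lintegrals
  have hlhs_inner : ∀ b : ℝ,
      gaussianReal 0 (e ^ 2).toNNReal (Prod.mk b ⁻¹' ((fun p : ℝ × ℝ => (p.1 + p.2, p.1)) ⁻¹' s))
        = ∫⁻ n, s.indicator (fun _ => (1:ℝ≥0∞)) (n + b, b) * ge n := by
    intro b
    rw [gaussianReal_apply _ he2' _, ← lintegral_indicator (measurable_prodMk_left hT)]
    congr 1
    ext n
    have hmem : (n ∈ Prod.mk b ⁻¹' ((fun p : ℝ × ℝ => (p.1 + p.2, p.1)) ⁻¹' s))
        ↔ ((n + b, b) ∈ s) := by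
      simp only [Set.mem_preimage]
      rw [add_comm b n]
    by_cases h : (n + b, b) ∈ s
    · rw [Set.indicator_of_mem (hmem.mpr h), Set.indicator_of_mem h, one_mul]
    · rw [Set.indicator_of_notMem (fun hh => h (hmem.mp hh)), Set.indicator_of_notMem h,
        zero_mul]
  have hrhs_inner : ∀ y : ℝ,
      gaussCondKernel v e y (Prod.mk y ⁻¹' s)
        = ∫⁻ x, s.indicator (fun _ => (1:ℝ≥0∞)) (y, x) * gt y x := by
    intro y
    rw [gaussCondKernel_apply, gaussianReal_apply _ hτ' _,
      ← lintegral_indicator (measurable_prodMk_left hs)]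
    congr 1
    ext x
    by_cases h : (y, x) ∈ s <;> simp [Set.indicator, h, hgt]
  have hfin : ∀ (m : ℝ) (t : ℝ≥0) (x : ℝ), gaussianPDF m t x ≠ ∞ :=
    fun _ _ _ => ENNReal.ofReal_ne_top
  simp_rw [hlhs_inner, hrhs_inner]
  -- replace gaussian measures by densities
  rw [gaussianReal_of_var_ne_zero _ hv', gaussianReal_of_var_ne_zero _ hw']
  have hindm : Measurable fun p : ℝ × ℝ => s.indicator (fun _ => (1:ℝ≥0∞)) p :=
    measurable_const.indicator hs
  have hlm : Measurable fun b => ∫⁻ n, s.indicator (fun _ => (1:ℝ≥0∞)) (n + b, b) * ge n := by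
    apply Measurable.lintegral_prod_right' (f := fun p : ℝ × ℝ =>
      s.indicator (fun _ => (1:ℝ≥0∞)) (p.2 + p.1, p.1) * ge p.2)
    exact (hindm.comp (by fun_prop)).mul (by simp only [hge, gaussianPDF, gaussianPDFReal]; fun_prop)
  have hrm : Measurable fun y => ∫⁻ x, s.indicator (fun _ => (1:ℝ≥0∞)) (y, x) * gt y x := by
    apply Measurable.lintegral_prod_right' (f := fun p : ℝ × ℝ =>
      s.indicator (fun _ => (1:ℝ≥0∞)) p * gt p.1 p.2)
    exact hindm.mul hgtm
  rw [lintegral_withDensity_eq_lintegral_mul _ (measurable_gaussianPDF _ _) hlm,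
    lintegral_withDensity_eq_lintegral_mul _ (measurable_gaussianPDF _ _) hrm]
  simp only [Pi.mul_apply]
  -- translation in the inner integral, pull constants in
  have step1 : ∀ b : ℝ,
      gv b * ∫⁻ n, s.indicator (fun _ => (1:ℝ≥0∞)) (n + b, b) * ge n
        = ∫⁻ y, gv b * (s.indicator (fun _ => (1:ℝ≥0∞)) (y, b) * ge (y - b)) := by
    intro b
    rw [lintegral_const_mul' _ _ (hfin _ _ b)]
    congr 1
    have htr := lintegral_add_right_eq_self (μ := volume)
      (fun y => s.indicator (fun _ => (1:ℝ≥0∞)) (y, b) * ge (y - b)) b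
    simpa using htr
  simp_rw [← hgv, step1]
  rw [lintegral_lintegral_swap]
  · refine lintegral_congr fun y => ?_
    rw [← lintegral_const_mul' _ _ (hfin _ _ y)]
    refine lintegral_congr fun b => ?_
    have hid := gaussianPDF_identity v e hv he y b
    simp only [hgv, hge, hgw, hgt]
    calc gaussianPDF 0 v.toNNReal b * (s.indicator (fun _ => (1:ℝ≥0∞)) (y, b)
          * gaussianPDF 0 (e ^ 2).toNNReal (y - b))
        = s.indicator (fun _ => (1:ℝ≥0∞)) (y, b) * (gaussianPDF 0 v.toNNReal b
          * gaussianPDF 0 (e ^ 2).toNNReal (y - b)) := by ring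
      _ = s.indicator (fun _ => (1:ℝ≥0∞)) (y, b) * (gaussianPDF 0 (v + e ^ 2).toNNReal y *
          gaussianPDF (v / (v + e ^ 2) * y) (v * e ^ 2 / (v + e ^ 2)).toNNReal b) := by rw [hid]
      _ = gaussianPDF 0 (v + e ^ 2).toNNReal y * (s.indicator (fun _ => (1:ℝ≥0∞)) (y, b) *
          gaussianPDF (v / (v + e ^ 2) * y) (v * e ^ 2 / (v + e ^ 2)).toNNReal b) := by ring
  · apply Measurable.aemeasurable
    apply Measurable.mul
    · simp only [hgv, gaussianPDF, gaussianPDFReal]; fun_prop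
    · apply Measurable.mul
      · exact hindm.comp (by fun_prop)
      · simp only [hge, gaussianPDF, gaussianPDFReal]; fun_prop

/-- If `β ~ N(0,v)` and `η ~ N(0,e²)` are independent, then the conditional distribution of
`β` given `β + η` is, for a.e. observed value `y` (w.r.t. the law of `β + η`), the Gaussian
`N((v/(v+e²))·y, v·e²/(v+e²))`. -/
theorem condDistrib_gaussian_signal_plus_noise
    {α : Type*} [MeasurableSpace α] (μ : Measure α) [IsProbabilityMeasure μ]
    (β η : α → ℝ) (hβm : Measurable β) (hηm : Measurable η)
    (v e : ℝ) (hv : 0 < v) (he : 0 < e)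
    (hβ : μ.map β = gaussianReal 0 v.toNNReal)
    (hη : μ.map η = gaussianReal 0 (e ^ 2).toNNReal)
    (hind : IndepFun β η μ) :
    ∀ᵐ y ∂(μ.map fun ω => β ω + η ω),
      condDistrib β (fun ω => β ω + η ω) μ y =
        gaussianReal (v / (v + e ^ 2) * y) (v * e ^ 2 / (v + e ^ 2)).toNNReal := by
  have hjoint := joint_eq_compProd μ β η hβm hηm v e hv he hβ hη hind
  have hSm : Measurable fun ω => β ω + η ω := hβm.add hηm
  have hS : μ.map (fun ω => β ω + η ω) = gaussianReal 0 (v + e ^ 2).toNNReal := by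
    have h1 : μ.map (fun ω => β ω + η ω) = (μ.map (fun ω => (β ω + η ω, β ω))).fst :=
      (Measure.fst_map_prodMk₀ hβm.aemeasurable).symm
    rw [h1, hjoint, Measure.fst_compProd]
  have huniq := condDistrib_ae_eq_of_measure_eq_compProd (μ := μ) (fun ω => β ω + η ω) hβm.aemeasurable
    (κ := gaussCondKernel v e) (by rw [hS]; exact hjoint)
  filter_upwards [huniq] with y hy
  rw [hy, gaussCondKernel_apply]
end

section
/- Let α ∈ (0,1], R > 0, and let σ² : [0,1] → ℝ satisfy 0 ≤ σ²(t) ≤ R and |σ²(x) − σ²(y)| ≤ R|x−y|^α for all x, y ∈ [0,1]. Define a(t) = ∫₀^t σ²(s) ds for t ∈ [0,1] and extend a by reflection, a(1+s) := a(1−s) for s ∈ (0,1]. Then there is a constant C > 0 depending only on α such that for all integers n ≥ 2: ∑_{1 ≤ k ≤ l ≤ n} ( n ∫_{(2k−1)/(2n)}^{(2k+1)/(2n)} (a(t) − a(k/n)) dt )² ≤ C R² n^{−2α}. -/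
open Real intervalIntegral MeasureTheory

lemma holder_continuousOn {σ2 : ℝ → ℝ} {R α : ℝ} (hα0 : 0 < α)
    (hHol : ∀ x ∈ Set.Icc (0:ℝ) 1, ∀ y ∈ Set.Icc (0:ℝ) 1, |σ2 x - σ2 y| ≤ R * |x - y| ^ α) :
    ContinuousOn σ2 (Set.Icc 0 1) := by
  intro x hx
  rw [ContinuousWithinAt, tendsto_iff_dist_tendsto_zero]
  have hb : Filter.Tendsto (fun y => R * |y - x| ^ α) (nhdsWithin x (Set.Icc 0 1)) (nhds 0) := by
    have h1 : Filter.Tendsto (fun y : ℝ => |y - x|) (nhdsWithin x (Set.Icc 0 1)) (nhds 0) := by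
      have : Filter.Tendsto (fun y : ℝ => |y - x|) (nhds x) (nhds |x - x|) :=
        ((continuous_id.sub continuous_const).abs).tendsto x
      simpa using this.mono_left nhdsWithin_le_nhds
    have h2 : Filter.Tendsto (fun d : ℝ => d ^ α) (nhds 0) (nhds 0) := by
      have := (Real.continuousAt_rpow_const 0 α (Or.inr hα0.le)).tendsto
      simpa [Real.zero_rpow hα0.ne'] using this
    simpa using (h2.comp h1).const_mul R
  refine squeeze_zero' ?_ ?_ hb
  · filter_upwards with y using dist_nonneg
  · filter_upwards [self_mem_nhdsWithin] with y hy
    simpa [Real.dist_eq] using hHol y hy x hx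

lemma sigma_intInt {σ2 : ℝ → ℝ} (hσc : ContinuousOn σ2 (Set.Icc 0 1))
    {u v : ℝ} (hu : u ∈ Set.Icc (0:ℝ) 1) (hv : v ∈ Set.Icc (0:ℝ) 1) :
    IntervalIntegrable σ2 volume u v :=
  (hσc.mono (Set.uIcc_subset_Icc hu hv)).intervalIntegrable

lemma abs_primitive_sub_le {σ2 : ℝ → ℝ} {R : ℝ}
    (hbd : ∀ t ∈ Set.Icc (0:ℝ) 1, 0 ≤ σ2 t ∧ σ2 t ≤ R)
    (hσc : ContinuousOn σ2 (Set.Icc 0 1))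
    {u v : ℝ} (hu : u ∈ Set.Icc (0:ℝ) 1) (hv : v ∈ Set.Icc (0:ℝ) 1) :
    |(∫ s in (0:ℝ)..v, σ2 s) - ∫ s in (0:ℝ)..u, σ2 s| ≤ R * |v - u| := by
  have h01 : (0:ℝ) ∈ Set.Icc (0:ℝ) 1 := by norm_num
  rw [integral_interval_sub_left (sigma_intInt hσc h01 hv) (sigma_intInt hσc h01 hu)]
  have hb : ∀ s ∈ Set.uIoc u v, ‖σ2 s‖ ≤ R := by
    intro s hs
    have hs' : s ∈ Set.Icc (0:ℝ) 1 := by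
      rcases Set.mem_uIoc.mp hs with ⟨h3, h4⟩ | ⟨h3, h4⟩
      · exact ⟨le_trans hu.1 h3.le, le_trans h4 hv.2⟩
      · exact ⟨le_trans hv.1 h3.le, le_trans h4 hu.2⟩
    have := hbd s hs'
    rw [Real.norm_eq_abs, abs_of_nonneg this.1]; exact this.2
  have := intervalIntegral.norm_integral_le_of_norm_le_const hb
  simpa [Real.norm_eq_abs] using this

lemma aux_mid {σ2 : ℝ → ℝ} {R α : ℝ} (hα0 : 0 < α) (hR : 0 ≤ R)
    (hbd : ∀ t ∈ Set.Icc (0:ℝ) 1, 0 ≤ σ2 t ∧ σ2 t ≤ R)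
    (hHol : ∀ x ∈ Set.Icc (0:ℝ) 1, ∀ y ∈ Set.Icc (0:ℝ) 1, |σ2 x - σ2 y| ≤ R * |x - y| ^ α)
    {m h : ℝ} (hh0 : 0 < h) (hm0 : 0 ≤ m - h) (hm1 : m + h ≤ 1) :
    |∫ t in (m-h)..(m+h), ((∫ s in (0:ℝ)..t, σ2 s) - ∫ s in (0:ℝ)..m, σ2 s)|
      ≤ 2 * R * h ^ α * h ^ 2 := by
  have hσc := holder_continuousOn hα0 hHol
  have h01 : (0:ℝ) ∈ Set.Icc (0:ℝ) 1 := by norm_num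
  have hsub : Set.Icc (m - h) (m + h) ⊆ Set.Icc (0:ℝ) 1 := Set.Icc_subset_Icc hm0 hm1
  have hmIcc : m ∈ Set.Icc (0:ℝ) 1 := hsub ⟨by linarith, by linarith⟩
  set c : ℝ := σ2 m with hc
  -- pointwise bound on the centered integrand
  have hg : ∀ t ∈ Set.Icc (m-h) (m+h),
      |((∫ s in (0:ℝ)..t, σ2 s) - ∫ s in (0:ℝ)..m, σ2 s) - c * (t - m)| ≤ R * h ^ α * h := by
    intro t ht
    have htI : t ∈ Set.Icc (0:ℝ) 1 := hsub ht
    have h1 : ((∫ s in (0:ℝ)..t, σ2 s) - ∫ s in (0:ℝ)..m, σ2 s) - c * (t - m)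
        = ∫ s in m..t, (σ2 s - c) := by
      rw [intervalIntegral.integral_sub (sigma_intInt hσc hmIcc htI) intervalIntegrable_const,
        intervalIntegral.integral_const,
        integral_interval_sub_left (sigma_intInt hσc h01 htI) (sigma_intInt hσc h01 hmIcc)]
      simp [smul_eq_mul]; ring
    rw [h1]
    have h2 : ∀ s ∈ Set.uIoc m t, ‖σ2 s - c‖ ≤ R * h ^ α := by
      intro s hs
      have hsle : |s - m| ≤ h := by
        rcases Set.mem_uIoc.mp hs with ⟨h3, h4⟩ | ⟨h3, h4⟩
        · rw [abs_of_pos (by linarith)]; linarith [ht.2]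
        · rw [abs_of_nonpos (by linarith)]; linarith [ht.1]
      have hsI : s ∈ Set.Icc (0:ℝ) 1 := by
        rcases Set.mem_uIoc.mp hs with ⟨h3, h4⟩ | ⟨h3, h4⟩
        · exact ⟨le_trans hmIcc.1 h3.le, le_trans h4 htI.2⟩
        · exact ⟨le_trans htI.1 h3.le, le_trans h4 hmIcc.2⟩
      have hH := hHol s hsI m hmIcc
      have : |s - m| ^ α ≤ h ^ α := Real.rpow_le_rpow (abs_nonneg _) hsle hα0.le
      rw [Real.norm_eq_abs]
      calc |σ2 s - c| ≤ R * |s - m| ^ α := hH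
        _ ≤ R * h ^ α := by exact mul_le_mul_of_nonneg_left this hR
    have h3 := intervalIntegral.norm_integral_le_of_norm_le_const h2
    rw [Real.norm_eq_abs] at h3
    calc |∫ s in m..t, (σ2 s - c)| ≤ R * h ^ α * |t - m| := h3
      _ ≤ R * h ^ α * h := by
          apply mul_le_mul_of_nonneg_left _ (by positivity)
          rw [abs_le]; constructor <;> linarith [ht.1, ht.2]
  -- the linear part integrates to zero
  have hlin : (∫ t in (m-h)..(m+h), (t - m)) = 0 := by
    rw [intervalIntegral.integral_sub intervalIntegrable_id intervalIntegrable_const,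
      integral_id, intervalIntegral.integral_const]
    simp [smul_eq_mul]; ring
  -- continuity of the primitive
  have hAc : ContinuousOn (fun t => ∫ s in (0:ℝ)..t, σ2 s) (Set.Icc (0:ℝ) 1) := by
    have hIcc : Set.uIcc (0:ℝ) 1 = Set.Icc (0:ℝ) 1 := Set.uIcc_of_le (by norm_num)
    have hInt : IntegrableOn σ2 (Set.uIcc (0:ℝ) 1) volume := by
      rw [hIcc]; exact hσc.integrableOn_Icc
    have := intervalIntegral.continuousOn_primitive_interval hInt
    rwa [hIcc] at this
  have hgint : IntervalIntegrable
      (fun t => ((∫ s in (0:ℝ)..t, σ2 s) - ∫ s in (0:ℝ)..m, σ2 s) - c * (t - m))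
      volume (m-h) (m+h) := by
    apply ContinuousOn.intervalIntegrable
    rw [Set.uIcc_of_le (by linarith)]
    exact ((hAc.mono hsub).sub continuousOn_const).sub (Continuous.continuousOn (by continuity))
  have hlint : IntervalIntegrable (fun t => c * (t - m)) volume (m-h) (m+h) :=
    Continuous.intervalIntegrable (by continuity) _ _
  have hsplit : (∫ t in (m-h)..(m+h), ((∫ s in (0:ℝ)..t, σ2 s) - ∫ s in (0:ℝ)..m, σ2 s))
      = ∫ t in (m-h)..(m+h),
          (((∫ s in (0:ℝ)..t, σ2 s) - ∫ s in (0:ℝ)..m, σ2 s) - c * (t - m)) := by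
    have heq : (∫ t in (m-h)..(m+h), ((∫ s in (0:ℝ)..t, σ2 s) - ∫ s in (0:ℝ)..m, σ2 s))
        = (∫ t in (m-h)..(m+h),
            (((∫ s in (0:ℝ)..t, σ2 s) - ∫ s in (0:ℝ)..m, σ2 s) - c * (t - m)))
          + ∫ t in (m-h)..(m+h), c * (t - m) := by
      rw [← intervalIntegral.integral_add hgint hlint]
      congr 1; funext t; ring
    rw [heq, intervalIntegral.integral_const_mul, hlin]; ring
  rw [hsplit]
  have hb : ∀ t ∈ Set.uIoc (m-h) (m+h),
      ‖((∫ s in (0:ℝ)..t, σ2 s) - ∫ s in (0:ℝ)..m, σ2 s) - c * (t - m)‖ ≤ R * h ^ α * h := by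
    intro t ht
    rw [Set.uIoc_of_le (by linarith)] at ht
    exact hg t ⟨ht.1.le, ht.2⟩
  have := intervalIntegral.norm_integral_le_of_norm_le_const hb
  rw [Real.norm_eq_abs] at this
  calc |∫ t in (m-h)..(m+h),
        (((∫ s in (0:ℝ)..t, σ2 s) - ∫ s in (0:ℝ)..m, σ2 s) - c * (t - m))|
      ≤ R * h ^ α * h * |(m+h) - (m-h)| := this
    _ = 2 * R * h ^ α * h ^ 2 := by
        rw [show (m+h) - (m-h) = 2*h by ring, abs_of_pos (by linarith)]; ring

lemma aux_end {σ2 : ℝ → ℝ} {R α : ℝ} (hα0 : 0 < α) (hR : 0 ≤ R)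
    (hbd : ∀ t ∈ Set.Icc (0:ℝ) 1, 0 ≤ σ2 t ∧ σ2 t ≤ R)
    (hHol : ∀ x ∈ Set.Icc (0:ℝ) 1, ∀ y ∈ Set.Icc (0:ℝ) 1, |σ2 x - σ2 y| ≤ R * |x - y| ^ α)
    {h : ℝ} (hh0 : 0 < h) (hh1 : h ≤ 1/2) :
    |∫ t in (1-h)..(1+h),
        ((if t ≤ 1 then ∫ s in (0:ℝ)..t, σ2 s else ∫ s in (0:ℝ)..(2-t), σ2 s)
          - ∫ s in (0:ℝ)..(1:ℝ), σ2 s)| ≤ 2 * R * h ^ 2 := by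
  have hσc := holder_continuousOn hα0 hHol
  have h1I : (1:ℝ) ∈ Set.Icc (0:ℝ) 1 := by norm_num
  have hAc : ContinuousOn (fun t => ∫ s in (0:ℝ)..t, σ2 s) (Set.Icc (0:ℝ) 1) := by
    have hIcc : Set.uIcc (0:ℝ) 1 = Set.Icc (0:ℝ) 1 := Set.uIcc_of_le (by norm_num)
    have hInt : IntegrableOn σ2 (Set.uIcc (0:ℝ) 1) volume := by
      rw [hIcc]; exact hσc.integrableOn_Icc
    have := intervalIntegral.continuousOn_primitive_interval hInt
    rwa [hIcc] at this
  set F : ℝ → ℝ := fun t =>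
    (if t ≤ 1 then ∫ s in (0:ℝ)..t, σ2 s else ∫ s in (0:ℝ)..(2-t), σ2 s)
      - ∫ s in (0:ℝ)..(1:ℝ), σ2 s with hF
  have hE1 : Set.EqOn F (fun t => (∫ s in (0:ℝ)..t, σ2 s) - ∫ s in (0:ℝ)..(1:ℝ), σ2 s)
      (Set.uIcc (1-h) 1) := by
    intro t ht
    rw [Set.uIcc_of_le (by linarith)] at ht
    simp only [hF]; rw [if_pos ht.2]
  have hE2 : Set.EqOn F (fun t => (∫ s in (0:ℝ)..(2-t), σ2 s) - ∫ s in (0:ℝ)..(1:ℝ), σ2 s)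
      (Set.uIcc 1 (1+h)) := by
    intro t ht
    rw [Set.uIcc_of_le (by linarith)] at ht
    simp only [hF]
    by_cases hle : t ≤ 1
    · have ht1 : t = 1 := le_antisymm hle ht.1
      rw [if_pos hle, ht1]; norm_num
    · rw [if_neg hle]
  have hsub1 : Set.Icc (1-h) (1:ℝ) ⊆ Set.Icc (0:ℝ) 1 := Set.Icc_subset_Icc (by linarith) le_rfl
  have hC1 : ContinuousOn F (Set.uIcc (1-h) 1) := by
    apply ContinuousOn.congr _ hE1
    rw [Set.uIcc_of_le (by linarith)]
    exact (hAc.mono hsub1).sub continuousOn_const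
  have hC2 : ContinuousOn F (Set.uIcc 1 (1+h)) := by
    apply ContinuousOn.congr _ hE2
    rw [Set.uIcc_of_le (by linarith)]
    refine ContinuousOn.sub ?_ continuousOn_const
    refine hAc.comp (Continuous.continuousOn (by continuity)) ?_
    intro t ht
    exact ⟨by simp only [Set.mem_Icc] at ht ⊢; linarith [ht.1, ht.2],
      by simp only [Set.mem_Icc] at ht ⊢; linarith [ht.1]⟩
  have hi1 : IntervalIntegrable F volume (1-h) 1 := hC1.intervalIntegrable
  have hi2 : IntervalIntegrable F volume 1 (1+h) := hC2.intervalIntegrable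
  have hsplit : (∫ t in (1-h)..(1+h), F t) = (∫ t in (1-h)..1, F t) + ∫ t in (1:ℝ)..(1+h), F t :=
    (intervalIntegral.integral_add_adjacent_intervals hi1 hi2).symm
  have hb1 : |∫ t in (1-h)..1, F t| ≤ R * h * h := by
    rw [intervalIntegral.integral_congr hE1]
    have hb : ∀ t ∈ Set.uIoc (1-h) 1,
        ‖(∫ s in (0:ℝ)..t, σ2 s) - ∫ s in (0:ℝ)..(1:ℝ), σ2 s‖ ≤ R * h := by
      intro t ht
      rw [Set.uIoc_of_le (by linarith)] at ht
      have htI : t ∈ Set.Icc (0:ℝ) 1 := ⟨by linarith [ht.1], ht.2⟩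
      have := abs_primitive_sub_le hbd hσc h1I htI
      rw [Real.norm_eq_abs]
      refine le_trans this ?_
      apply mul_le_mul_of_nonneg_left _ hR
      rw [abs_le]; constructor <;> linarith [ht.1, ht.2]
    have := intervalIntegral.norm_integral_le_of_norm_le_const hb
    rw [Real.norm_eq_abs] at this
    calc |∫ t in (1-h)..1, ((∫ s in (0:ℝ)..t, σ2 s) - ∫ s in (0:ℝ)..(1:ℝ), σ2 s)|
        ≤ R * h * |1 - (1-h)| := this
      _ = R * h * h := by rw [show (1:ℝ) - (1-h) = h by ring, abs_of_pos hh0]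
  have hb2 : |∫ t in (1:ℝ)..(1+h), F t| ≤ R * h * h := by
    rw [intervalIntegral.integral_congr hE2]
    have hb : ∀ t ∈ Set.uIoc (1:ℝ) (1+h),
        ‖(∫ s in (0:ℝ)..(2-t), σ2 s) - ∫ s in (0:ℝ)..(1:ℝ), σ2 s‖ ≤ R * h := by
      intro t ht
      rw [Set.uIoc_of_le (by linarith)] at ht
      have htI : (2-t) ∈ Set.Icc (0:ℝ) 1 := ⟨by linarith [ht.2], by linarith [ht.1]⟩
      have := abs_primitive_sub_le hbd hσc h1I htI
      rw [Real.norm_eq_abs]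
      refine le_trans this ?_
      apply mul_le_mul_of_nonneg_left _ hR
      rw [abs_le]; constructor <;> linarith [ht.1, ht.2]
    have := intervalIntegral.norm_integral_le_of_norm_le_const hb
    rw [Real.norm_eq_abs] at this
    calc |∫ t in (1:ℝ)..(1+h), ((∫ s in (0:ℝ)..(2-t), σ2 s) - ∫ s in (0:ℝ)..(1:ℝ), σ2 s)|
        ≤ R * h * |(1+h) - 1| := this
      _ = R * h * h := by rw [show (1:ℝ) + h - 1 = h by ring, abs_of_pos hh0]
  calc |∫ t in (1-h)..(1+h), F t| = |(∫ t in (1-h)..1, F t) + ∫ t in (1:ℝ)..(1+h), F t| := by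
        rw [hsplit]
    _ ≤ |∫ t in (1-h)..1, F t| + |∫ t in (1:ℝ)..(1+h), F t| := abs_add_le _ _
    _ ≤ R * h * h + R * h * h := add_le_add hb1 hb2
    _ = 2 * R * h ^ 2 := by ring
/-- Discretization bound: for `σ² : [0,1] → [0,R]` which is `α`-Hölder with constant `R`,
`a(t) = ∫₀^t σ²` extended by reflection `a(1+s) = a(1−s)`, there is `C > 0` depending only
on `α` with
`∑_{1≤k≤l≤n} (n ∫_{(2k−1)/(2n)}^{(2k+1)/(2n)} (a(t) − a(k/n)) dt)² ≤ C R² n^{−2α}`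
for all `n ≥ 2`. -/
theorem sum_squared_average_increments_le (α : ℝ) (hα0 : 0 < α) (hα1 : α ≤ 1) :
    ∃ C > (0 : ℝ), ∀ R > (0 : ℝ), ∀ σ2 : ℝ → ℝ,
      (∀ t ∈ Set.Icc (0 : ℝ) 1, 0 ≤ σ2 t ∧ σ2 t ≤ R) →
      (∀ x ∈ Set.Icc (0 : ℝ) 1, ∀ y ∈ Set.Icc (0 : ℝ) 1, |σ2 x - σ2 y| ≤ R * |x - y| ^ α) →
      ∀ n : ℕ, 2 ≤ n →
        ∑ k ∈ Finset.Icc 1 n, ∑ l ∈ Finset.Icc k n,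
          ((n : ℝ) * ∫ t in ((2 * (k : ℝ) - 1) / (2 * n))..((2 * (k : ℝ) + 1) / (2 * n)),
            ((if t ≤ 1 then ∫ s in (0 : ℝ)..t, σ2 s else ∫ s in (0 : ℝ)..(2 - t), σ2 s) -
              ∫ s in (0 : ℝ)..((k : ℝ) / n), σ2 s)) ^ 2 ≤
          C * R ^ 2 * (n : ℝ) ^ (-2 * α) := by
  refine ⟨1, one_pos, ?_⟩
  intro R hR σ2 hbd hHol n hn
  have hN0 : (0:ℝ) < (n:ℝ) := by exact_mod_cast Nat.lt_of_lt_of_le (by norm_num) hn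
  have hN2 : (2:ℝ) ≤ (n:ℝ) := by exact_mod_cast hn
  set N : ℝ := (n:ℝ) with hNdef
  set h : ℝ := 1/(2*N) with hhdef
  have hh0 : 0 < h := by rw [hhdef]; positivity
  have hh1 : h ≤ 1/2 := by
    rw [hhdef, div_le_div_iff₀ (by linarith) (by norm_num)]; linarith
  -- rpow facts
  have hNa : (0:ℝ) ≤ N ^ (-2*α) := Real.rpow_nonneg hN0.le _
  have hpow : (h ^ α) ^ 2 ≤ N ^ (-2*α) := by
    have h1N : h ≤ 1/N := by
      rw [hhdef, div_le_div_iff₀ (by linarith) hN0]; linarith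
    have hstep : h ^ α ≤ (1/N) ^ α := Real.rpow_le_rpow hh0.le h1N hα0.le
    have h2 : ((1:ℝ)/N) ^ α = N ^ (-α) := by
      rw [one_div, Real.inv_rpow hN0.le, ← Real.rpow_neg hN0.le]
    calc (h ^ α) ^ 2 ≤ (N ^ (-α)) ^ 2 := by
          apply pow_le_pow_left₀ (Real.rpow_nonneg hh0.le α) (h2 ▸ hstep)
      _ = N ^ (-2*α) := by
          rw [← Real.rpow_natCast (N ^ (-α)) 2, ← Real.rpow_mul hN0.le]
          norm_num; ring_nf
  have hpow2 : N ^ (-(2:ℝ)) ≤ N ^ (-2*α) :=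
    Real.rpow_le_rpow_of_exponent_le (by linarith) (by linarith)
  -- bound for middle terms
  have hmid : ∀ k : ℕ, 1 ≤ k → k < n →
      |∫ t in ((2*(k:ℝ)-1)/(2*N))..((2*(k:ℝ)+1)/(2*N)),
        ((if t ≤ 1 then ∫ s in (0:ℝ)..t, σ2 s else ∫ s in (0:ℝ)..(2-t), σ2 s) -
          ∫ s in (0:ℝ)..((k:ℝ)/N), σ2 s)| ≤ 2*R*h^α*h^2 := by
    intro k hk1 hkn
    have hk1' : (1:ℝ) ≤ (k:ℝ) := by exact_mod_cast hk1
    have hkn' : (k:ℝ) + 1 ≤ N := by rw [hNdef]; exact_mod_cast hkn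
    set m : ℝ := (k:ℝ)/N with hm
    have hp : (2*(k:ℝ)-1)/(2*N) = m - h := by
      rw [hm, hhdef]; field_simp
    have hq : (2*(k:ℝ)+1)/(2*N) = m + h := by
      rw [hm, hhdef]; field_simp
    have hm0 : 0 ≤ m - h := by
      rw [← hp]; apply div_nonneg (by linarith) (by linarith)
    have hm1 : m + h ≤ 1 := by
      rw [← hq, div_le_one (by linarith)]; linarith
    rw [hp, hq]
    have hcongr : (∫ t in (m-h)..(m+h),
        ((if t ≤ 1 then ∫ s in (0:ℝ)..t, σ2 s else ∫ s in (0:ℝ)..(2-t), σ2 s) -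
          ∫ s in (0:ℝ)..m, σ2 s))
        = ∫ t in (m-h)..(m+h), ((∫ s in (0:ℝ)..t, σ2 s) - ∫ s in (0:ℝ)..m, σ2 s) := by
      apply intervalIntegral.integral_congr
      intro t ht
      rw [Set.uIcc_of_le (by linarith)] at ht
      simp only
      rw [if_pos (le_trans ht.2 hm1)]
    rw [hcongr]
    exact aux_mid hα0 hR.le hbd hHol hh0 hm0 hm1
  -- bound for the last term
  have hend :
      |∫ t in ((2*(n:ℝ)-1)/(2*N))..((2*(n:ℝ)+1)/(2*N)),
        ((if t ≤ 1 then ∫ s in (0:ℝ)..t, σ2 s else ∫ s in (0:ℝ)..(2-t), σ2 s) -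
          ∫ s in (0:ℝ)..((n:ℝ)/N), σ2 s)| ≤ 2*R*h^2 := by
    have hp : (2*(n:ℝ)-1)/(2*N) = 1 - h := by
      rw [hhdef, hNdef]; field_simp
    have hq : (2*(n:ℝ)+1)/(2*N) = 1 + h := by
      rw [hhdef, hNdef]; field_simp
    have hm : (n:ℝ)/N = 1 := by rw [hNdef]; exact div_self hN0.ne'
    rw [hp, hq, hm]
    exact aux_end hα0 hR.le hbd hHol hh0 hh1
  -- rewrite the double sum
  have hrw : ∑ k ∈ Finset.Icc 1 n, ∑ l ∈ Finset.Icc k n,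
      ((N) * ∫ t in ((2*(k:ℝ)-1)/(2*N))..((2*(k:ℝ)+1)/(2*N)),
        ((if t ≤ 1 then ∫ s in (0:ℝ)..t, σ2 s else ∫ s in (0:ℝ)..(2-t), σ2 s) -
          ∫ s in (0:ℝ)..((k:ℝ)/N), σ2 s)) ^ 2
      = ∑ k ∈ Finset.Icc 1 n, ((n+1-k : ℕ) : ℝ) *
        ((N) * ∫ t in ((2*(k:ℝ)-1)/(2*N))..((2*(k:ℝ)+1)/(2*N)),
        ((if t ≤ 1 then ∫ s in (0:ℝ)..t, σ2 s else ∫ s in (0:ℝ)..(2-t), σ2 s) -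
          ∫ s in (0:ℝ)..((k:ℝ)/N), σ2 s)) ^ 2 := by
    refine Finset.sum_congr rfl fun k hk => ?_
    rw [Finset.sum_const, Nat.card_Icc, nsmul_eq_mul]
  rw [hrw]
  -- per-term bounds
  set B1 : ℝ := R^2 * N^(-2*α) / (4*N) with hB1
  set B2 : ℝ := R^2 * N^(-2*α) / 4 with hB2
  have hB1nn : 0 ≤ B1 := by rw [hB1]; positivity
  have hterm : ∀ k ∈ Finset.Icc 1 n, ((n+1-k : ℕ) : ℝ) *
      ((N) * ∫ t in ((2*(k:ℝ)-1)/(2*N))..((2*(k:ℝ)+1)/(2*N)),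
        ((if t ≤ 1 then ∫ s in (0:ℝ)..t, σ2 s else ∫ s in (0:ℝ)..(2-t), σ2 s) -
          ∫ s in (0:ℝ)..((k:ℝ)/N), σ2 s)) ^ 2
      ≤ if k = n then B2 else B1 := by
    intro k hk
    rw [Finset.mem_Icc] at hk
    set I : ℝ := ∫ t in ((2*(k:ℝ)-1)/(2*N))..((2*(k:ℝ)+1)/(2*N)),
        ((if t ≤ 1 then ∫ s in (0:ℝ)..t, σ2 s else ∫ s in (0:ℝ)..(2-t), σ2 s) -
          ∫ s in (0:ℝ)..((k:ℝ)/N), σ2 s) with hI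
    by_cases hkn : k = n
    · subst hkn
      rw [if_pos rfl]
      have hIb : |I| ≤ 2*R*h^2 := hend
      have hI2 : I^2 ≤ (2*R*h^2)^2 := by
        rw [← sq_abs]; exact pow_le_pow_left₀ (abs_nonneg _) hIb 2
      have hcard : ((k+1-k : ℕ) : ℝ) = 1 := by
        have : k+1-k = 1 := by omega
        rw [this]; norm_num
      rw [hcard, one_mul, mul_pow]
      calc N^2 * I^2 ≤ N^2 * (2*R*h^2)^2 := by
            apply mul_le_mul_of_nonneg_left hI2 (by positivity)
        _ = R^2 * N^(-(2:ℝ)) / 4 := by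
            rw [hhdef, Real.rpow_neg hN0.le, show ((2:ℝ)) = ((2:ℕ):ℝ) by norm_num,
              Real.rpow_natCast]
            field_simp; ring
        _ ≤ B2 := by
            rw [hB2]
            apply div_le_div_of_nonneg_right ?_ (by norm_num)
            exact mul_le_mul_of_nonneg_left hpow2 (by positivity)
    · rw [if_neg hkn]
      have hIb : |I| ≤ 2*R*h^α*h^2 := hmid k hk.1 (lt_of_le_of_ne hk.2 hkn)
      have hI2 : I^2 ≤ (2*R*h^α*h^2)^2 := by
        rw [← sq_abs]; exact pow_le_pow_left₀ (abs_nonneg _) hIb 2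
      have hcard : ((n+1-k : ℕ) : ℝ) ≤ N := by
        rw [hNdef]
        have : n+1-k ≤ n := by omega
        exact_mod_cast this
      have hcnn : (0:ℝ) ≤ ((n+1-k : ℕ) : ℝ) := Nat.cast_nonneg _
      calc ((n+1-k : ℕ) : ℝ) * (N * I)^2 ≤ N * (N^2 * (2*R*h^α*h^2)^2) := by
            rw [mul_pow]
            apply mul_le_mul hcard (mul_le_mul_of_nonneg_left hI2 (by positivity))
              (by positivity) (by linarith)
        _ = R^2 * (h^α)^2 / (4*N) := by
            rw [hhdef]; field_simp; ring
        _ ≤ B1 := by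
            rw [hB1]
            apply div_le_div_of_nonneg_right ?_ (by positivity)
            exact mul_le_mul_of_nonneg_left hpow (by positivity)
  calc (∑ k ∈ Finset.Icc 1 n, ((n+1-k : ℕ) : ℝ) *
      ((N) * ∫ t in ((2*(k:ℝ)-1)/(2*N))..((2*(k:ℝ)+1)/(2*N)),
        ((if t ≤ 1 then ∫ s in (0:ℝ)..t, σ2 s else ∫ s in (0:ℝ)..(2-t), σ2 s) -
          ∫ s in (0:ℝ)..((k:ℝ)/N), σ2 s)) ^ 2)
      ≤ ∑ k ∈ Finset.Icc 1 n, (if k = n then B2 else B1) := Finset.sum_le_sum hterm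
    _ = ∑ k ∈ Finset.Icc 1 n, (B1 + (if k = n then B2 - B1 else 0)) := by
        refine Finset.sum_congr rfl fun k _ => ?_
        split <;> ring
    _ = (n : ℝ) * B1 + (B2 - B1) := by
        rw [Finset.sum_add_distrib, Finset.sum_const, Finset.sum_ite_eq', Nat.card_Icc,
          if_pos (by rw [Finset.mem_Icc]; omega)]
        simp only [nsmul_eq_mul]
        norm_num
    _ ≤ (n : ℝ) * B1 + B2 := by linarith
    _ ≤ 1 * R^2 * N^(-2*α) := by
        rw [hB1, hB2]
        have : (n:ℝ) * (R^2 * N^(-2*α) / (4*N)) = R^2 * N^(-2*α)/4 := by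
          rw [← hNdef]; field_simp
        rw [this]
        have hRN : 0 ≤ R^2 * N^(-2*α) := by positivity
        linarith
end

section
/- For n ∈ ℕ, n ≥ 1, and α ∈ (0,1), define σₙ²(t) = 1 + n^{−α} cos(πnt) for t ∈ [0,1]. Then: (a) for every i ∈ {1, …, n}, ∫_{(i−1)/n}^{i/n} σₙ²(t) dt = 1/n; and (b) there exist constants c₁, c₂ > 0 and N ∈ ℕ such that for all n ≥ N, c₁ n^{−2α} ≤ ∫₀¹ ( √(2σₙ(t)) − √2 )² dt ≤ c₂ n^{−2α}, where σₙ(t) = (σₙ²(t))^{1/2}. -/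
open Real intervalIntegral

lemma pointwise_bd (u : ℝ) (hu0 : 0 ≤ u) (hu2 : u ≤ 2) :
    2/225 * (u-1)^2 ≤ (Real.sqrt (2 * Real.sqrt u) - Real.sqrt 2)^2 ∧
    (Real.sqrt (2 * Real.sqrt u) - Real.sqrt 2)^2 ≤ 2 * (u-1)^2 := by
  set v := Real.sqrt (Real.sqrt u) with hv
  have hv0 : 0 ≤ v := Real.sqrt_nonneg _
  have hsu : Real.sqrt u ≤ 2 := by
    rw [show (2:ℝ) = Real.sqrt 4 by rw [show (4:ℝ) = 2^2 by norm_num, Real.sqrt_sq]; norm_num]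
    exact Real.sqrt_le_sqrt (by linarith)
  have hv2 : v ≤ 2 := by
    rw [hv, show (2:ℝ) = Real.sqrt 4 by rw [show (4:ℝ) = 2^2 by norm_num, Real.sqrt_sq]; norm_num]
    exact Real.sqrt_le_sqrt (by linarith)
  have hv4 : v^4 = u := by
    have h1 : v^2 = Real.sqrt u := Real.sq_sqrt (Real.sqrt_nonneg u)
    have h2 : (Real.sqrt u)^2 = u := Real.sq_sqrt hu0
    calc v^4 = (v^2)^2 := by ring
    _ = u := by rw [h1, h2]
  have hrw : Real.sqrt (2 * Real.sqrt u) = Real.sqrt 2 * v := by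
    rw [Real.sqrt_mul (by norm_num : (0:ℝ) ≤ 2)]
  have hexp : (Real.sqrt (2 * Real.sqrt u) - Real.sqrt 2)^2 = 2 * (v-1)^2 := by
    rw [hrw, show Real.sqrt 2 * v - Real.sqrt 2 = Real.sqrt 2 * (v - 1) by ring,
      mul_pow, Real.sq_sqrt (by norm_num : (0:ℝ) ≤ 2)]
  rw [hexp, ← hv4]
  constructor
  · have hD : (v+1)*(v^2+1) ≤ 15 := by nlinarith
    have hDnn : (0:ℝ) ≤ (v+1)*(v^2+1) := by positivity
    have hD2 : ((v+1)*(v^2+1))^2 ≤ 225 := by nlinarith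
    have hfac : (v^4-1)^2 = (v-1)^2 * ((v+1)*(v^2+1))^2 := by ring
    nlinarith [sq_nonneg (v-1), mul_le_mul_of_nonneg_left hD2 (sq_nonneg (v-1))]
  · nlinarith [sq_nonneg (v-1), sq_nonneg v, sq_nonneg ((v-1)*v), sq_nonneg ((v-1)*(v^2+v)), mul_nonneg hv0 hv0]

lemma cos_sq_integral (n : ℕ) (hn : 1 ≤ n) :
    ∫ t in (0:ℝ)..1, Real.cos (π * n * t)^2 = 1/2 := by
  have hc : (π * n : ℝ) ≠ 0 := by
    have : (0:ℝ) < n := by exact_mod_cast hn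
    positivity
  have h := intervalIntegral.integral_comp_mul_left (a := (0:ℝ)) (b := 1)
    (fun x => Real.cos x ^ 2) hc
  simp only [mul_zero, mul_one] at h
  rw [h, integral_cos_sq]
  have hs : Real.sin (π * n) = 0 := by
    rw [mul_comm]; exact Real.sin_nat_mul_pi n
  rw [hs]
  simp only [mul_zero, zero_mul, Real.sin_zero, Real.cos_zero, sub_zero, smul_eq_mul]
  field_simp
  ring

lemma cos_integral (c a b : ℝ) (hc : c ≠ 0) :
    ∫ t in a..b, Real.cos (c * t) = c⁻¹ * (Real.sin (c * b) - Real.sin (c * a)) := by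
  have h := intervalIntegral.integral_comp_mul_left (a := a) (b := b)
    (fun x => Real.cos x) hc
  rw [h, integral_cos]; simp

/-- The counterexample volatility `σₙ²(t) = 1 + n^{−α} cos(πnt)`, `α ∈ (0,1)`:
(a) `∫_{(i−1)/n}^{i/n} σₙ²(t) dt = 1/n` for all `1 ≤ i ≤ n`, and
(b) there are `c₁, c₂ > 0` and `N` with
`c₁ n^{−2α} ≤ ∫₀¹ (√(2σₙ(t)) − √2)² dt ≤ c₂ n^{−2α}` for all `n ≥ N`. -/
theorem counterexample_volatility (α : ℝ) (hα0 : 0 < α) (hα1 : α < 1) :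
    (∀ n : ℕ, 1 ≤ n → ∀ i ∈ Finset.Icc 1 n,
      ∫ t in (((i : ℝ) - 1) / n)..((i : ℝ) / n),
        (1 + (n : ℝ) ^ (-α) * Real.cos (π * n * t)) = 1 / (n : ℝ)) ∧
    ∃ c₁ > (0 : ℝ), ∃ c₂ > (0 : ℝ), ∃ N : ℕ, ∀ n : ℕ, N ≤ n →
      c₁ * (n : ℝ) ^ (-2 * α) ≤
        (∫ t in (0 : ℝ)..1,
          (Real.sqrt (2 * Real.sqrt (1 + (n : ℝ) ^ (-α) * Real.cos (π * n * t)))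
            - Real.sqrt 2) ^ 2) ∧
      (∫ t in (0 : ℝ)..1,
          (Real.sqrt (2 * Real.sqrt (1 + (n : ℝ) ^ (-α) * Real.cos (π * n * t)))
            - Real.sqrt 2) ^ 2) ≤ c₂ * (n : ℝ) ^ (-2 * α) := by
  constructor
  · -- part (a)
    intro n hn i hi
    have hn0 : (n:ℝ) ≠ 0 := by
      have : (0:ℝ) < n := by exact_mod_cast hn
      linarith
    have hc : (π * n : ℝ) ≠ 0 := by
      have : (0:ℝ) < n := by exact_mod_cast hn
      positivity
    have h1 : IntervalIntegrable (fun _ : ℝ => (1:ℝ)) MeasureTheory.volume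
        (((i:ℝ)-1)/n) ((i:ℝ)/n) := intervalIntegrable_const
    have h2 : IntervalIntegrable (fun t : ℝ => (n:ℝ)^(-α) * Real.cos (π * n * t))
        MeasureTheory.volume (((i:ℝ)-1)/n) ((i:ℝ)/n) := by
      apply Continuous.intervalIntegrable
      fun_prop
    rw [intervalIntegral.integral_add h1 h2, intervalIntegral.integral_const,
      intervalIntegral.integral_const_mul, cos_integral _ _ _ hc]
    have e1 : π * (n:ℝ) * ((i:ℝ)/n) = (i:ℝ) * π := by field_simp
    have e2 : π * (n:ℝ) * (((i:ℝ)-1)/n) = ((i:ℤ) - 1 : ℤ) * π := by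
      push_cast; field_simp
    rw [e1, e2]
    rw [show ((i:ℝ) * π) = ((i:ℤ):ℝ) * π by push_cast; ring]
    rw [Real.sin_int_mul_pi, Real.sin_int_mul_pi]
    simp only [sub_zero, mul_zero, add_zero, smul_eq_mul, sub_self]
    field_simp
    ring
  · -- part (b)
    refine ⟨1/225, by norm_num, 1, by norm_num, 1, fun n hn => ?_⟩
    have hnpos : (0:ℝ) < n := by exact_mod_cast hn
    set ε := (n:ℝ)^(-α) with hε
    have hε0 : 0 < ε := Real.rpow_pos_of_pos hnpos _
    have hε1 : ε ≤ 1 :=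
      Real.rpow_le_one_of_one_le_of_nonpos (by exact_mod_cast hn) (by linarith)
    have hpow : (n:ℝ)^(-2*α) = ε^2 := by
      rw [hε, show (-2*α) = (-α)*2 by ring, Real.rpow_mul (le_of_lt hnpos),
        show ((2:ℝ) = ((2:ℕ):ℝ)) by norm_num, Real.rpow_natCast]
    set f : ℝ → ℝ := fun t =>
      (Real.sqrt (2 * Real.sqrt (1 + ε * Real.cos (π * n * t))) - Real.sqrt 2)^2 with hf
    have hfc : Continuous f := by fun_prop
    have hfi : IntervalIntegrable f MeasureTheory.volume 0 1 :=
      hfc.intervalIntegrable 0 1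
    have hptwise : ∀ t : ℝ,
        2/225 * (ε^2 * Real.cos (π * n * t)^2) ≤ f t ∧
        f t ≤ 2 * (ε^2 * Real.cos (π * n * t)^2) := by
      intro t
      have hcos := Real.neg_one_le_cos (π * n * t)
      have hcos' := Real.cos_le_one (π * n * t)
      have hu0 : 0 ≤ 1 + ε * Real.cos (π * n * t) := by nlinarith
      have hu2 : 1 + ε * Real.cos (π * n * t) ≤ 2 := by nlinarith
      have := pointwise_bd (1 + ε * Real.cos (π * n * t)) hu0 hu2
      have hsq : (1 + ε * Real.cos (π * n * t) - 1)^2 = ε^2 * Real.cos (π * n * t)^2 := by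
        ring
      rw [hsq] at this
      exact this
    have hgi : IntervalIntegrable (fun t => 2/225 * (ε^2 * Real.cos (π * n * t)^2))
        MeasureTheory.volume 0 1 := by
      apply Continuous.intervalIntegrable; fun_prop
    have hhi : IntervalIntegrable (fun t => 2 * (ε^2 * Real.cos (π * n * t)^2))
        MeasureTheory.volume 0 1 := by
      apply Continuous.intervalIntegrable; fun_prop
    have hlow : (∫ t in (0:ℝ)..1, 2/225 * (ε^2 * Real.cos (π * n * t)^2))
        ≤ ∫ t in (0:ℝ)..1, f t :=
      intervalIntegral.integral_mono_on (by norm_num) hgi hfi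
        (fun t _ => (hptwise t).1)
    have hhigh : (∫ t in (0:ℝ)..1, f t)
        ≤ ∫ t in (0:ℝ)..1, 2 * (ε^2 * Real.cos (π * n * t)^2) :=
      intervalIntegral.integral_mono_on (by norm_num) hfi hhi
        (fun t _ => (hptwise t).2)
    have hIlow : (∫ t in (0:ℝ)..1, 2/225 * (ε^2 * Real.cos (π * n * t)^2))
        = 1/225 * ε^2 := by
      rw [show (fun t => 2/225 * (ε^2 * Real.cos (π * n * t)^2))
          = fun t => (2/225 * ε^2) * Real.cos (π * n * t)^2 by funext t; ring]
      rw [intervalIntegral.integral_const_mul, cos_sq_integral n hn]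
      ring
    have hIhigh : (∫ t in (0:ℝ)..1, 2 * (ε^2 * Real.cos (π * n * t)^2))
        = ε^2 := by
      rw [show (fun t => 2 * (ε^2 * Real.cos (π * n * t)^2))
          = fun t => (2 * ε^2) * Real.cos (π * n * t)^2 by funext t; ring]
      rw [intervalIntegral.integral_const_mul, cos_sq_integral n hn]
      ring
    rw [hpow]
    constructor
    · calc 1/225 * ε^2 = _ := hIlow.symm
        _ ≤ _ := hlow
    · calc (∫ t in (0:ℝ)..1, f t) ≤ _ := hhigh
        _ = ε^2 := hIhigh
        _ = 1 * ε^2 := by ring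
end

section
/- Let N ∈ ℕ and let y₁, …, y_N be independent centered real Gaussian random variables with variances g₁, …, g_N ≥ 0, and let a₁, …, a_N ∈ ℝ. Then E[ ( ∑_{j=1}^N a_j (y_j² − g_j) )⁴ ] ≤ 60 · ( ∑_{j=1}^N a_j² g_j² )². -/
open MeasureTheory ProbabilityTheory

section Aux
open Real Set
open scoped NNReal ENNReal


namespace FMAux

lemma pdf_eq (v : ℝ≥0) (x : ℝ) :
    gaussianPDFReal 0 v x = (√(2 * π * v))⁻¹ * rexp (-(2*(v:ℝ))⁻¹ * x ^ 2) := by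
  rw [gaussianPDFReal]
  congr 1
  rw [sub_zero]
  ring_nf

lemma integral_gaussianReal_eq {v : ℝ≥0} (hv : v ≠ 0) (f : ℝ → ℝ) :
    ∫ x, f x ∂(gaussianReal 0 v) = ∫ x, gaussianPDFReal 0 v x * f x := by
  rw [gaussianReal_of_var_ne_zero _ hv]
  have h : (fun x => ENNReal.ofReal (gaussianPDFReal 0 v x)) = fun x => ((Real.toNNReal (gaussianPDFReal 0 v x) : ℝ≥0) : ℝ≥0∞) := by
    ext x; rw [ENNReal.ofReal]
  rw [gaussianPDF_def, h, integral_withDensity_eq_integral_smul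
    (measurable_gaussianPDFReal 0 v).real_toNNReal]
  congr 1
  ext x
  simp [NNReal.smul_def, Real.coe_toNNReal _ (gaussianPDFReal_nonneg 0 v x)]

lemma integrable_pow_gaussianReal (v : ℝ≥0) (n : ℕ) :
    Integrable (fun x : ℝ => x ^ n) (gaussianReal 0 v) := by
  by_cases hv : v = 0
  · rw [hv, gaussianReal_zero_var]
    refine ⟨(measurable_id.pow_const n).aestronglyMeasurable, ?_⟩
    rw [HasFiniteIntegral, lintegral_dirac' _ (Measurable.enorm (by fun_prop))]
    exact ENNReal.coe_lt_top
  rw [gaussianReal_of_var_ne_zero _ hv]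
  have h : (fun x => ENNReal.ofReal (gaussianPDFReal 0 v x)) = fun x => ((Real.toNNReal (gaussianPDFReal 0 v x) : ℝ≥0) : ℝ≥0∞) := by
    ext x; rw [ENNReal.ofReal]
  rw [gaussianPDF_def, h, integrable_withDensity_iff_integrable_smul
    (measurable_gaussianPDFReal 0 v).real_toNNReal]
  have hv' : (0:ℝ) < v := lt_of_le_of_ne v.coe_nonneg (by exact_mod_cast (Ne.symm hv))
  have hb : (0:ℝ) < (2*(v:ℝ))⁻¹ := by positivity
  have : Integrable (fun x : ℝ => x ^ ((n:ℝ)) * rexp (-(2*(v:ℝ))⁻¹ * x ^ 2)) :=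
    integrable_rpow_mul_exp_neg_mul_sq hb (by exact_mod_cast neg_one_lt_zero.trans_le (Nat.cast_nonneg n))
  simp_rw [Real.rpow_natCast] at this
  apply (this.const_mul ((√(2 * π * v))⁻¹)).congr' ?_ ?_
  · exact (((measurable_gaussianPDFReal 0 v).real_toNNReal.coe_nnreal_real).smul
      (measurable_id.pow_const n)).aestronglyMeasurable
  · filter_upwards with x
    rw [NNReal.smul_def, Real.coe_toNNReal _ (gaussianPDFReal_nonneg 0 v x), pdf_eq, smul_eq_mul]
    congr 1
    ring

end FMAux

namespace FMAux2
open FMAux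

lemma integral_even_pow (v : ℝ≥0) (k : ℕ) :
    ∫ x, x ^ (2*k) ∂(gaussianReal 0 v) = (2*(v:ℝ))^k * Real.Gamma (k + 1/2) / √π := by
  by_cases hv : v = 0
  · subst hv
    rw [gaussianReal_zero_var, integral_dirac (fun x : ℝ => x ^ (2*k)) 0]
    cases k with
    | zero =>
        have hG : Real.Gamma ((0:ℕ) + 1/2 : ℝ) = √π := by
          norm_num [Real.Gamma_one_half_eq]
        simp only [Nat.mul_zero, pow_zero, Nat.cast_zero] at hG ⊢
        rw [hG, one_mul, div_self (Real.sqrt_ne_zero'.mpr Real.pi_pos)]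
    | succ m => simp [pow_succ, zero_pow]
  · have hv' : (0:ℝ) < v := lt_of_le_of_ne v.coe_nonneg (by exact_mod_cast (Ne.symm hv))
    set b : ℝ := (2*(v:ℝ))⁻¹ with hbdef
    have hb : 0 < b := by positivity
    rw [integral_gaussianReal_eq hv]
    have h1 : ∫ x : ℝ, gaussianPDFReal 0 v x * x ^ (2*k)
        = (√(2 * π * v))⁻¹ * ∫ x : ℝ, x ^ (2*k) * rexp (-b * x^2) := by
      rw [← integral_const_mul]; congr 1; ext x; rw [pdf_eq]; ring
    have h2 : ∫ x : ℝ, x ^ (2*k) * rexp (-b * x^2)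
        = 2 * ∫ x in Ioi (0:ℝ), x ^ (2*k) * rexp (-b * x^2) := by
      rw [← integral_comp_abs (f := fun x => x ^ (2*k) * rexp (-b * x^2))]
      congr 1; ext x; rw [(even_two_mul k).pow_abs, sq_abs]
    have h3 : ∫ x in Ioi (0:ℝ), x ^ (2*k) * rexp (-b * x^2)
        = b ^ (-(((2*k:ℕ):ℝ) + 1) / 2) * (1/2) * Real.Gamma ((((2*k:ℕ):ℝ) + 1)/2) := by
      rw [← integral_rpow_mul_exp_neg_mul_rpow two_pos
        (lt_of_lt_of_le neg_one_lt_zero (Nat.cast_nonneg _)) hb]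
      refine setIntegral_congr_fun measurableSet_Ioi (fun x hx => ?_)
      rw [Real.rpow_natCast, Real.rpow_two]
    rw [h1, h2, h3]
    have hgamma : (((2*k:ℕ):ℝ) + 1)/2 = (k:ℝ) + 1/2 := by push_cast; ring
    rw [hgamma]
    have hbpow : b ^ (-(((2*k:ℕ):ℝ) + 1) / 2) = (2*(v:ℝ)) ^ ((k:ℝ) + 1/2) := by
      rw [hbdef, Real.inv_rpow (by positivity), ← Real.rpow_neg (by positivity)]
      congr 1; push_cast; ring
    rw [hbpow, Real.rpow_add (by positivity), Real.rpow_natCast]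
    rw [show (2*(v:ℝ)) ^ ((1:ℝ)/2) = √(2*(v:ℝ)) from (Real.sqrt_eq_rpow _).symm]
    have hsplit : √(2 * π * (v:ℝ)) = √(2*(v:ℝ)) * √π := by
      rw [← Real.sqrt_mul (by positivity)]; congr 1; ring
    rw [hsplit]
    have h2v : √(2*(v:ℝ)) ≠ 0 := Real.sqrt_ne_zero'.mpr (by positivity)
    have hπ : √π ≠ 0 := Real.sqrt_ne_zero'.mpr Real.pi_pos
    field_simp

lemma momval (v : ℝ≥0) (k : ℕ) (c : ℝ) (hc : Real.Gamma ((k:ℝ) + 1/2) = √π * c) :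
    ∫ x, x ^ (2*k) ∂(gaussianReal 0 v) = (2*(v:ℝ))^k * c := by
  rw [integral_even_pow v k, hc]
  have hπ : √π ≠ 0 := Real.sqrt_ne_zero'.mpr Real.pi_pos
  field_simp

lemma gamma_chain :
    Real.Gamma ((1:ℝ) + 1/2) = √π * (1/2) ∧
    Real.Gamma ((2:ℝ) + 1/2) = √π * (3/4) ∧
    Real.Gamma ((3:ℝ) + 1/2) = √π * (15/8) ∧
    Real.Gamma ((4:ℝ) + 1/2) = √π * (105/16) := by
  have h1 : Real.Gamma ((1:ℝ) + 1/2) = √π * (1/2) := by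
    rw [show (1:ℝ) + 1/2 = 1/2 + 1 by ring, Real.Gamma_add_one (by norm_num),
      Real.Gamma_one_half_eq]; ring
  have h2 : Real.Gamma ((2:ℝ) + 1/2) = √π * (3/4) := by
    rw [show (2:ℝ) + 1/2 = (1 + 1/2) + 1 by ring, Real.Gamma_add_one (by norm_num), h1]; ring
  have h3 : Real.Gamma ((3:ℝ) + 1/2) = √π * (15/8) := by
    rw [show (3:ℝ) + 1/2 = (2 + 1/2) + 1 by ring, Real.Gamma_add_one (by norm_num), h2]; ring
  have h4 : Real.Gamma ((4:ℝ) + 1/2) = √π * (105/16) := by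
    rw [show (4:ℝ) + 1/2 = (3 + 1/2) + 1 by ring, Real.Gamma_add_one (by norm_num), h3]; ring
  exact ⟨h1, h2, h3, h4⟩

lemma moment_two (v : ℝ≥0) : ∫ x, x ^ 2 ∂(gaussianReal 0 v) = (v:ℝ) := by
  have h := momval v 1 (1/2) (by push_cast; exact gamma_chain.1)
  norm_num at h
  linarith

lemma moment_four (v : ℝ≥0) : ∫ x, x ^ 4 ∂(gaussianReal 0 v) = 3*(v:ℝ)^2 := by
  have h := momval v 2 (3/4) (by push_cast; exact gamma_chain.2.1)
  norm_num at h
  rw [h]; ring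

lemma moment_six (v : ℝ≥0) : ∫ x, x ^ 6 ∂(gaussianReal 0 v) = 15*(v:ℝ)^3 := by
  have h := momval v 3 (15/8) (by push_cast; exact gamma_chain.2.2.1)
  norm_num at h
  rw [h]; ring

lemma moment_eight (v : ℝ≥0) : ∫ x, x ^ 8 ∂(gaussianReal 0 v) = 105*(v:ℝ)^4 := by
  have h := momval v 4 (105/16) (by push_cast; exact gamma_chain.2.2.2)
  norm_num at h
  rw [h]; ring

end FMAux2

end Aux

section Key
open MeasureTheory ProbabilityTheory Finset


lemma key_induction {Ω : Type*} [MeasurableSpace Ω] (μ : Measure Ω) [IsProbabilityMeasure μ]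
    {ι : Type*} (X : ι → Ω → ℝ) (t : ι → ℝ)
    (hXm : ∀ i, Measurable (X i))
    (hindep : iIndepFun X μ)
    (ht : ∀ i, 0 ≤ t i)
    (hint : ∀ i m, Integrable (fun ω => X i ω ^ m) μ)
    (h1 : ∀ i, ∫ ω, X i ω ∂μ = 0)
    (h2 : ∀ i, ∫ ω, X i ω ^ 2 ∂μ = 2 * t i)
    (h4 : ∀ i, ∫ ω, X i ω ^ 4 ∂μ = 60 * t i ^ 2)
    (s : Finset ι) :
    (∀ m, Integrable (fun ω => (∑ j ∈ s, X j ω) ^ m) μ) ∧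
    (∫ ω, (∑ j ∈ s, X j ω) ∂μ = 0) ∧
    (∫ ω, (∑ j ∈ s, X j ω) ^ 2 ∂μ = 2 * ∑ j ∈ s, t j) ∧
    (∫ ω, (∑ j ∈ s, X j ω) ^ 4 ∂μ ≤ 60 * (∑ j ∈ s, t j) ^ 2) := by
  classical
  induction s using Finset.induction_on with
  | empty =>
    refine ⟨fun m => ?_, ?_, ?_, ?_⟩ <;> simp
  | insert i s hi ih =>
    obtain ⟨ihInt, ihS1, ihS2, ihS4⟩ := ih
    set S : Ω → ℝ := fun ω => ∑ j ∈ s, X j ω with hSdef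
    set Z : Ω → ℝ := fun ω => X i ω with hZdef
    have hsum : ∀ ω, ∑ j ∈ insert i s, X j ω = Z ω + S ω := fun ω => Finset.sum_insert hi
    have hSZ : IndepFun S Z μ := by
      have h := hindep.indepFun_finsetSum_of_notMem hXm hi
      have : (∑ j ∈ s, X j) = S := by ext ω; simp [hSdef, Finset.sum_apply]
      rwa [this] at h
    have hpq : ∀ p q : ℕ, IndepFun (fun ω => Z ω ^ p) (fun ω => S ω ^ q) μ := fun p q =>
      (hSZ.symm).comp (measurable_id.pow_const p) (measurable_id.pow_const q)
    have hZint : ∀ m, Integrable (fun ω => Z ω ^ m) μ := fun m => hint i m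
    have hcrossInt : ∀ p q : ℕ, Integrable (fun ω => Z ω ^ p * S ω ^ q) μ := fun p q =>
      (hpq p q).integrable_mul (hZint p) (ihInt q)
    have hcross : ∀ p q : ℕ, ∫ ω, Z ω ^ p * S ω ^ q ∂μ
        = (∫ ω, Z ω ^ p ∂μ) * (∫ ω, S ω ^ q ∂μ) := fun p q =>
      (hpq p q).integral_fun_mul_eq_mul_integral (hZint p).1 (ihInt q).1
    have hZ1 : ∫ ω, Z ω ∂μ = 0 := h1 i
    have hS1pow : ∫ ω, S ω ^ 1 ∂μ = 0 := by simpa using ihS1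
    have hZ1pow : ∫ ω, Z ω ^ 1 ∂μ = 0 := by simpa using hZ1
    have hTnn : 0 ≤ ∑ j ∈ s, t j := Finset.sum_nonneg fun j _ => ht j
    refine ⟨fun m => ?_, ?_, ?_, ?_⟩
    · -- integrability of (Z+S)^m
      simp_rw [hsum, add_pow]
      apply integrable_finset_sum
      intro k _
      exact (hcrossInt k (m - k)).mul_const _
    · simp_rw [hsum]
      rw [integral_add ((hZint 1).congr (by filter_upwards with ω; simp)) ((ihInt 1).congr (by filter_upwards with ω; simp [hSdef]))]
      rw [hZ1, ihS1, add_zero]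
    · simp_rw [hsum]
      have e2 : ∀ ω, (Z ω + S ω) ^ 2 = Z ω ^ 2 + 2 * (Z ω ^ 1 * S ω ^ 1) + S ω ^ 2 := by
        intro ω; ring
      simp_rw [e2]
      have hA : Integrable (fun ω => Z ω ^ 2 + 2 * (Z ω ^ 1 * S ω ^ 1)) μ := by
        exact (hZint 2).add ((hcrossInt 1 1).const_mul 2)
      rw [integral_add hA (ihInt 2), integral_add (hZint 2) ((hcrossInt 1 1).const_mul 2),
        integral_const_mul, hcross 1 1, hZ1pow, hS1pow, h2 i, ihS2, Finset.sum_insert hi]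
      ring
    · simp_rw [hsum]
      have e4 : ∀ ω, (Z ω + S ω) ^ 4 =
          (((Z ω ^ 4 + 4 * (Z ω ^ 3 * S ω ^ 1)) + 6 * (Z ω ^ 2 * S ω ^ 2))
            + 4 * (Z ω ^ 1 * S ω ^ 3)) + S ω ^ 4 := by
        intro ω; ring
      simp_rw [e4]
      have hB1 : Integrable (fun ω => Z ω ^ 4 + 4 * (Z ω ^ 3 * S ω ^ 1)) μ := by
        exact (hZint 4).add ((hcrossInt 3 1).const_mul 4)
      have hB2 : Integrable (fun ω => (Z ω ^ 4 + 4 * (Z ω ^ 3 * S ω ^ 1))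
          + 6 * (Z ω ^ 2 * S ω ^ 2)) μ := by
        exact hB1.add ((hcrossInt 2 2).const_mul 6)
      have hB3 : Integrable (fun ω => ((Z ω ^ 4 + 4 * (Z ω ^ 3 * S ω ^ 1))
          + 6 * (Z ω ^ 2 * S ω ^ 2)) + 4 * (Z ω ^ 1 * S ω ^ 3)) μ := by
        exact hB2.add ((hcrossInt 1 3).const_mul 4)
      rw [integral_add hB3 (ihInt 4),
        integral_add hB2 ((hcrossInt 1 3).const_mul 4),
        integral_add hB1 ((hcrossInt 2 2).const_mul 6),
        integral_add (hZint 4) ((hcrossInt 3 1).const_mul 4),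
        integral_const_mul, integral_const_mul, integral_const_mul,
        hcross 3 1, hcross 2 2, hcross 1 3, hS1pow, hZ1pow, h4 i, h2 i, ihS2,
        Finset.sum_insert hi]
      have h60 : ∫ ω, S ω ^ 4 ∂μ ≤ 60 * (∑ j ∈ s, t j) ^ 2 := ihS4
      nlinarith [ht i, hTnn, sq_nonneg (t i + ∑ j ∈ s, t j), mul_nonneg (ht i) hTnn]

end Key

/-- Fourth-moment bound for Gaussian quadratic chaos: if `y₁, …, y_N` are independent
centered Gaussians with variances `g₁, …, g_N ≥ 0` and `a₁, …, a_N ∈ ℝ`, then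
`E[(∑_j a_j(y_j² − g_j))⁴] ≤ 60(∑_j a_j² g_j²)²`. -/
theorem fourth_moment_gaussian_chaos_le
    {Ω : Type*} [MeasurableSpace Ω] (μ : Measure Ω) [IsProbabilityMeasure μ]
    (N : ℕ) (y : Fin N → Ω → ℝ) (g a : Fin N → ℝ)
    (hg : ∀ j, 0 ≤ g j) (hmeas : ∀ j, Measurable (y j))
    (hlaw : ∀ j, μ.map (y j) = gaussianReal 0 (g j).toNNReal)
    (hind : iIndepFun y μ) :
    (∫ ω, (∑ j, a j * ((y j ω) ^ 2 - g j)) ^ 4 ∂μ) ≤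
      60 * (∑ j, (a j) ^ 2 * (g j) ^ 2) ^ 2 := by
  classical
  set X : Fin N → Ω → ℝ := fun j ω => a j * ((y j ω) ^ 2 - g j) with hX
  set t : Fin N → ℝ := fun j => (a j) ^ 2 * (g j) ^ 2 with htdef
  have hXm : ∀ j, Measurable (X j) := fun j =>
    (((hmeas j).pow_const 2).sub_const (g j)).const_mul (a j)
  have hXindep : iIndepFun X μ := by
    have h := hind.comp (fun j z => a j * (z ^ 2 - g j))
      (fun j => ((measurable_id.pow_const 2).sub_const (g j)).const_mul (a j))
    exact h
  have ht : ∀ j, 0 ≤ t j := fun j => mul_nonneg (sq_nonneg _) (sq_nonneg _)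
  have hcoe : ∀ j, (((g j).toNNReal : ℝ)) = g j := fun j => Real.coe_toNNReal _ (hg j)
  have momΩ : ∀ (j) (n : ℕ), ∫ ω, (y j ω) ^ n ∂μ
      = ∫ x, x ^ n ∂(gaussianReal 0 (g j).toNNReal) := by
    intro j n
    rw [← hlaw j, integral_map (hmeas j).aemeasurable
      (by fun_prop : AEStronglyMeasurable (fun x : ℝ => x ^ n) (Measure.map (y j) μ))]
  have intΩ : ∀ (j) (n : ℕ), Integrable (fun ω => (y j ω) ^ n) μ := by
    intro j n
    have h := FMAux.integrable_pow_gaussianReal (g j).toNNReal n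
    rw [← hlaw j] at h
    exact (integrable_map_measure
      (by fun_prop : AEStronglyMeasurable (fun x : ℝ => x ^ n) (Measure.map (y j) μ))
      (hmeas j).aemeasurable).mp h
  have m2 : ∀ j, ∫ ω, (y j ω) ^ 2 ∂μ = g j := fun j => by rw [momΩ j 2, FMAux2.moment_two, hcoe j]
  have m4 : ∀ j, ∫ ω, (y j ω) ^ 4 ∂μ = 3 * (g j) ^ 2 := fun j => by
    rw [momΩ j 4, FMAux2.moment_four, hcoe j]
  have m6 : ∀ j, ∫ ω, (y j ω) ^ 6 ∂μ = 15 * (g j) ^ 3 := fun j => by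
    rw [momΩ j 6, FMAux2.moment_six, hcoe j]
  have m8 : ∀ j, ∫ ω, (y j ω) ^ 8 ∂μ = 105 * (g j) ^ 4 := fun j => by
    rw [momΩ j 8, FMAux2.moment_eight, hcoe j]
  have hXint : ∀ j m, Integrable (fun ω => X j ω ^ m) μ := by
    intro j m
    refine Integrable.mono' (((intΩ j (2*m)).const_mul (|a j| ^ m * 2 ^ m)).add
      (integrable_const (|a j| ^ m * 2 ^ m * |g j| ^ m)))
      ((hXm j).pow_const m).aestronglyMeasurable ?_
    filter_upwards with ω
    have h1 : |(y j ω) ^ 2 - g j| ≤ (y j ω) ^ 2 + |g j| :=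
      (abs_sub _ _).trans (by rw [abs_of_nonneg (sq_nonneg (y j ω))])
    calc ‖X j ω ^ m‖ = (|a j| * |(y j ω) ^ 2 - g j|) ^ m := by
          rw [Real.norm_eq_abs, abs_pow, abs_mul]
      _ ≤ (|a j| * ((y j ω) ^ 2 + |g j|)) ^ m := by
          exact pow_le_pow_left₀ (by positivity)
            (mul_le_mul_of_nonneg_left h1 (abs_nonneg _)) m
      _ = |a j| ^ m * ((y j ω) ^ 2 + |g j|) ^ m := mul_pow _ _ _
      _ ≤ |a j| ^ m * (2 ^ m * ((y j ω) ^ (2*m) + |g j| ^ m)) := by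
          refine mul_le_mul_of_nonneg_left ?_ (pow_nonneg (abs_nonneg _) m)
          calc ((y j ω) ^ 2 + |g j|) ^ m
              ≤ 2 ^ (m-1) * (((y j ω) ^ 2) ^ m + |g j| ^ m) :=
                add_pow_le (sq_nonneg _) (abs_nonneg _) m
            _ ≤ 2 ^ m * (((y j ω) ^ 2) ^ m + |g j| ^ m) := by
                refine mul_le_mul_of_nonneg_right
                  (pow_le_pow_right₀ one_le_two (Nat.sub_le m 1)) (by positivity)
            _ = 2 ^ m * ((y j ω) ^ (2*m) + |g j| ^ m) := by rw [← pow_mul]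
      _ = |a j| ^ m * 2 ^ m * (y j ω) ^ (2*m) + |a j| ^ m * 2 ^ m * |g j| ^ m := by ring
  have hX1 : ∀ j, ∫ ω, X j ω ∂μ = 0 := by
    intro j
    simp only [hX]
    rw [integral_const_mul, integral_sub (intΩ j 2) (integrable_const _), m2 j, integral_const]
    simp
  have hX2 : ∀ j, ∫ ω, X j ω ^ 2 ∂μ = 2 * t j := by
    intro j
    have e : ∀ ω, X j ω ^ 2 = ((a j)^2 * (y j ω)^4 - (2*(a j)^2*(g j)) * (y j ω)^2)
        + (a j)^2*(g j)^2 := by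
      intro ω; simp only [hX]; ring
    simp_rw [e]
    have hI : Integrable (fun ω => (a j)^2 * (y j ω)^4 - (2*(a j)^2*(g j)) * (y j ω)^2) μ := by
      exact ((intΩ j 4).const_mul _).sub ((intΩ j 2).const_mul _)
    rw [integral_add hI (integrable_const _),
      integral_sub ((intΩ j 4).const_mul _) ((intΩ j 2).const_mul _),
      integral_const_mul, integral_const_mul, integral_const, m4 j, m2 j]
    simp only [htdef, measure_univ, probReal_univ, ENNReal.toReal_one, smul_eq_mul, one_mul]
    ring
  have hX4 : ∀ j, ∫ ω, X j ω ^ 4 ∂μ = 60 * t j ^ 2 := by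
    intro j
    have e : ∀ ω, X j ω ^ 4 =
        ((((a j)^4 * (y j ω)^8 - (4*(a j)^4*(g j)) * (y j ω)^6)
          + (6*(a j)^4*(g j)^2) * (y j ω)^4) - (4*(a j)^4*(g j)^3) * (y j ω)^2)
        + (a j)^4*(g j)^4 := by
      intro ω; simp only [hX]; ring
    simp_rw [e]
    have hI1 : Integrable (fun ω => (a j)^4 * (y j ω)^8 - (4*(a j)^4*(g j)) * (y j ω)^6) μ := by
      exact ((intΩ j 8).const_mul _).sub ((intΩ j 6).const_mul _)
    have hI2 : Integrable (fun ω => ((a j)^4 * (y j ω)^8 - (4*(a j)^4*(g j)) * (y j ω)^6)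
        + (6*(a j)^4*(g j)^2) * (y j ω)^4) μ := by
      exact hI1.add ((intΩ j 4).const_mul _)
    have hI3 : Integrable (fun ω => (((a j)^4 * (y j ω)^8 - (4*(a j)^4*(g j)) * (y j ω)^6)
        + (6*(a j)^4*(g j)^2) * (y j ω)^4) - (4*(a j)^4*(g j)^3) * (y j ω)^2) μ := by
      exact hI2.sub ((intΩ j 2).const_mul _)
    rw [integral_add hI3 (integrable_const _),
      integral_sub hI2 ((intΩ j 2).const_mul _),
      integral_add hI1 ((intΩ j 4).const_mul _),
      integral_sub ((intΩ j 8).const_mul _) ((intΩ j 6).const_mul _),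
      integral_const_mul, integral_const_mul, integral_const_mul, integral_const_mul,
      integral_const, m8 j, m6 j, m4 j, m2 j]
    simp only [htdef, measure_univ, probReal_univ, ENNReal.toReal_one, smul_eq_mul, one_mul]
    ring
  have key := key_induction μ X t hXm hXindep ht hXint hX1 hX2 hX4 Finset.univ
  exact key.2.2.2
end
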